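/- arXiv:1907.08751 — 2 statements merged into one kernel-verified Lean document; each statement's English description precedes it below -/
import Mathlib

section
/- Let φ = (1+√5)/2 and let V_I = {(0,±1,±φ), (±1,±φ,0), (±φ,0,±1)} ⊂ ℝ³ (all sign combinations, 12 points), and let r be the minimum distance between two distinct points of V_I (namely r = 2). For each w ∈ V_I let S_w = {x ∈ ℝ³ : ‖x − w‖ = r}. Then: (i) each sphere S_w contains exactly 5 points of V_I (the vertices adjacent to w in the icosahedron); (ii) each point of V_I lies on exactly 5 of the 12 spheres S_w; (iii) an isometry g of ℝ³ satisfies g(V_I) = V_I and maps each sphere S_w onto some sphere S_{w'} if and only if g(V_I) = V_I. Hence (V_I, {S_w : w ∈ V_I}) is a (12_5) configuration of points and spheres whose symmetry group equals the full symmetry group of the regular icosahedron with vertex set V_I. -/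
noncomputable section

/-- Euclidean 3-space. -/
abbrev E3 : Type := EuclideanSpace ℝ (Fin 3)

/-- The point (a, b, c) of ℝ³. -/
def pt (a b c : ℝ) : E3 := WithLp.toLp 2 ![a, b, c]

/-- The set of signs {-1, 1}. -/
def sgn : Set ℝ := {-1, 1}

/-- The golden ratio φ = (1 + √5)/2. -/
def gr : ℝ := (1 + Real.sqrt 5) / 2

/-- Vertex set of a regular tetrahedron. -/
def VT : Set E3 := {pt 1 1 1, pt 1 (-1) (-1), pt (-1) 1 (-1), pt (-1) (-1) 1}

/-- Vertex set of a cube. -/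
def VC : Set E3 := {p | ∃ a ∈ sgn, ∃ b ∈ sgn, ∃ c ∈ sgn, p = pt a b c}

/-- Vertex set of a regular octahedron. -/
def VO : Set E3 := {p | ∃ a ∈ sgn, p = pt a 0 0 ∨ p = pt 0 a 0 ∨ p = pt 0 0 a}

/-- Vertex set of a regular icosahedron. -/
def VI : Set E3 :=
  {p | ∃ a ∈ sgn, ∃ b ∈ sgn,
    p = pt 0 a (b * gr) ∨ p = pt a (b * gr) 0 ∨ p = pt (a * gr) 0 b}

/-- Vertex set of a regular dodecahedron. -/
def VD : Set E3 :=
  {p | (∃ a ∈ sgn, ∃ b ∈ sgn, ∃ c ∈ sgn, p = pt a b c) ∨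
    (∃ a ∈ sgn, ∃ b ∈ sgn,
      p = pt 0 (a / gr) (b * gr) ∨ p = pt (a / gr) (b * gr) 0 ∨ p = pt (b * gr) 0 (a / gr))}

/-- A line of ℝ³: a 1-dimensional affine subspace, viewed as a set of points. -/
def IsLine (l : Set E3) : Prop :=
  ∃ p v : E3, v ≠ 0 ∧ l = {x | ∃ t : ℝ, x = p + t • v}

/-- A geometric configuration of points and lines in ℝ³: a finite set of points and a
finite set of lines such that two distinct lines contain at most one common point. -/
structure PLConfig where
  pts : Set E3
  lns : Set (Set E3)
  pts_finite : pts.Finite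
  lns_finite : lns.Finite
  lns_line : ∀ l ∈ lns, IsLine l
  lines_meet : ∀ l₁ ∈ lns, ∀ l₂ ∈ lns, l₁ ≠ l₂ → (pts ∩ l₁ ∩ l₂).Subsingleton

/-- The valence of a point: the number of lines of the configuration through it. -/
def PLConfig.pointValence (Z : PLConfig) (p : E3) : ℕ := {l ∈ Z.lns | p ∈ l}.ncard

/-- The valence of a line: the number of points of the configuration on it. -/
def PLConfig.lineValence (Z : PLConfig) (l : Set E3) : ℕ := (Z.pts ∩ l).ncard

/-- Adjacency in the Levi (incidence) graph of a configuration. -/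
def PLConfig.LeviAdj (Z : PLConfig) : E3 ⊕ Set E3 → E3 ⊕ Set E3 → Prop
  | Sum.inl p, Sum.inr l => p ∈ Z.pts ∧ l ∈ Z.lns ∧ p ∈ l
  | Sum.inr l, Sum.inl p => p ∈ Z.pts ∧ l ∈ Z.lns ∧ p ∈ l
  | _, _ => False

/-- Vertices of the Levi graph of a configuration. -/
def PLConfig.LeviVert (Z : PLConfig) : E3 ⊕ Set E3 → Prop
  | Sum.inl p => p ∈ Z.pts
  | Sum.inr l => l ∈ Z.lns

/-- A configuration is connected if its Levi graph is connected. -/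
def PLConfig.Connected (Z : PLConfig) : Prop :=
  ∀ a b, Z.LeviVert a → Z.LeviVert b → Relation.ReflTransGen Z.LeviAdj a b

/-- A balanced (n_k) configuration: n points and n lines, all k-valent. -/
def PLConfig.IsBalanced (Z : PLConfig) (n k : ℕ) : Prop :=
  Z.pts.ncard = n ∧ Z.lns.ncard = n ∧
    (∀ p ∈ Z.pts, Z.pointValence p = k) ∧ (∀ l ∈ Z.lns, Z.lineValence l = k)

/-- A (p_q, n_k) configuration: p q-valent points and n k-valent lines. -/
def PLConfig.IsConfig (Z : PLConfig) (p q n k : ℕ) : Prop :=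
  Z.pts.ncard = p ∧ Z.lns.ncard = n ∧
    (∀ x ∈ Z.pts, Z.pointValence x = q) ∧ (∀ l ∈ Z.lns, Z.lineValence l = k)

/-- An isometry of ℝ³ preserves a configuration if it maps its point set onto itself
and maps every line of the configuration onto a line of the configuration. -/
def Preserves (g : E3 ≃ᵢ E3) (Z : PLConfig) : Prop :=
  g '' Z.pts = Z.pts ∧ ∀ l ∈ Z.lns, g '' l ∈ Z.lns

/-- An isometry of ℝ³ is orientation-preserving if it is the composition of a linear
isometry of determinant 1 with a translation. -/
def OrientationPreserving (g : E3 ≃ᵢ E3) : Prop :=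
  ∃ (f : E3 ≃ₗᵢ[ℝ] E3) (b : E3),
    LinearMap.det (f.toLinearEquiv : E3 →ₗ[ℝ] E3) = 1 ∧ ∀ x, g x = f x + b

/-! ### Auxiliary material for `icosahedron_sphere_configuration` -/

namespace IcoAux

/-- `ℤ[√5]` modelled as pairs of integers, up to an overall factor of `2`. -/
abbrev K := ℤ × ℤ

/-- Points of `ℝ³` with coordinates in `(1/2)ℤ[√5]`. -/
abbrev P := K × K × K

/-- Squaring in `ℤ[√5]` (twice the square of half the value, in our scaling). -/
def ksq (x : K) : K := (x.1 * x.1 + 5 * x.2 * x.2, 2 * x.1 * x.2)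

/-- Twice the squared distance between the represented points of `ℝ³`. -/
def d2K (p q : P) : K := ksq (p.1 - q.1) + ksq (p.2.1 - q.2.1) + ksq (p.2.2 - q.2.2)

def zK : K := (0, 0)
def oK : K := (2, 0)
def mK : K := (-2, 0)
def gK : K := (1, 1)
def hK : K := (-1, -1)

/-- The twelve icosahedron vertices in the `K`-model. -/
def LP : List P :=
  [(zK, oK, gK), (zK, oK, hK), (zK, mK, gK), (zK, mK, hK),
   (oK, gK, zK), (oK, hK, zK), (mK, gK, zK), (mK, hK, zK),
   (gK, zK, oK), (gK, zK, mK), (hK, zK, oK), (hK, zK, mK)]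

lemma LP_card : LP.toFinset.card = 12 := by decide
lemma LP_d2 : ∀ p ∈ LP, ∀ q ∈ LP,
    p = q ∨ d2K p q = (16, 0) ∨ d2K p q = (24, 8) ∨ d2K p q = (40, 8) := by decide
lemma LP_deg1 : ∀ w ∈ LP.toFinset,
    (LP.toFinset.filter (fun p => d2K p w = (16, 0))).card = 5 := by decide
lemma LP_deg2 : ∀ v ∈ LP.toFinset,
    (LP.toFinset.filter (fun w => d2K v w = (16, 0))).card = 5 := by decide
lemma LP_adj : d2K (zK, oK, gK) (oK, gK, zK) = (16, 0) := by decide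

/-- Realization of an element of `K` as a real number (with the factor `1/2`). -/
noncomputable def ικ (z : K) : ℝ := ((z.1 : ℝ) + (z.2 : ℝ) * Real.sqrt 5) / 2

lemma sqrt5_sq : Real.sqrt 5 ^ 2 = 5 := Real.sq_sqrt (by norm_num)

lemma sqrt5_gt : (2 : ℝ) < Real.sqrt 5 := by
  nlinarith [Real.sqrt_nonneg 5, sqrt5_sq]

lemma irr5 : Irrational (Real.sqrt 5) := by
  simpa using (Nat.Prime.irrational_sqrt (p := 5) (by norm_num))

lemma ικ_inj : Function.Injective ικ := by
  rintro ⟨a, b⟩ ⟨c, d⟩ h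
  have h' : (a : ℝ) + (b : ℝ) * Real.sqrt 5 = (c : ℝ) + (d : ℝ) * Real.sqrt 5 := by
    simp only [ικ] at h; linarith
  by_cases hbd : b = d
  · subst hbd
    have : (a : ℝ) = c := by linarith
    simp [Prod.ext_iff, (by exact_mod_cast this : a = c)]
  · exfalso
    have hdb : ((d : ℤ) : ℝ) - ((b : ℤ) : ℝ) ≠ 0 := by
      intro hh
      have hbd' : ((b : ℤ) : ℝ) = ((d : ℤ) : ℝ) := by linarith
      exact hbd (by exact_mod_cast hbd')
    have : Real.sqrt 5 = ((((a - c : ℤ) : ℚ) / ((d - b : ℤ) : ℚ) : ℚ) : ℝ) := by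
      push_cast
      field_simp
      linarith
    exact irr5 ⟨((a - c : ℤ) : ℚ) / ((d - b : ℤ) : ℚ), this.symm⟩


lemma ικ_ksq (x : K) : ικ (ksq x) = 2 * (ικ x) ^ 2 := by
  simp only [ικ, ksq]
  push_cast
  linear_combination (-((x.2 : ℝ)) ^ 2 / 2) * sqrt5_sq

lemma ικ_add (x y : K) : ικ (x + y) = ικ x + ικ y := by
  simp only [ικ, Prod.fst_add, Prod.snd_add]; push_cast; ring

lemma ικ_sub (x y : K) : ικ (x - y) = ικ x - ικ y := by
  simp only [ικ, Prod.fst_sub, Prod.snd_sub]; push_cast; ring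

lemma ικ_z : ικ zK = 0 := by simp [ικ, zK]
lemma ικ_o : ικ oK = 1 := by simp [ικ, oK]
lemma ικ_m : ικ mK = -1 := by norm_num [ικ, mK]
lemma ικ_g : ικ gK = gr := by simp [ικ, gK, gr]
lemma ικ_h : ικ hK = -gr := by norm_num [ικ, hK, gr]; ring

/-- Realization of a `K`-model point in `ℝ³`. -/
noncomputable def emb (p : P) : E3 := pt (ικ p.1) (ικ p.2.1) (ικ p.2.2)

lemma pt_ext {a b c d e f : ℝ} : pt a b c = pt d e f ↔ a = d ∧ b = e ∧ c = f := by
  constructor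
  · intro h
    exact ⟨congrArg (fun v : E3 => v 0) h, congrArg (fun v : E3 => v 1) h, congrArg (fun v : E3 => v 2) h⟩
  · rintro ⟨rfl, rfl, rfl⟩; rfl

lemma emb_inj : Function.Injective emb := by
  rintro ⟨x1, x2, x3⟩ ⟨y1, y2, y3⟩ h
  obtain ⟨h1, h2, h3⟩ := pt_ext.mp h
  exact Prod.ext (ικ_inj h1) (Prod.ext (ικ_inj h2) (ικ_inj h3))

lemma dist_pt (a b c d e f : ℝ) :
    dist (pt a b c) (pt d e f) = Real.sqrt ((a-d)^2 + (b-e)^2 + (c-f)^2) := by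
  rw [EuclideanSpace.dist_eq]
  congr 1
  simp [pt, Fin.sum_univ_three, Real.dist_eq, sq_abs]

lemma dist_emb_sq (p q : P) : dist (emb p) (emb q) ^ 2 = ικ (d2K p q) / 2 := by
  rw [emb, emb, dist_pt, Real.sq_sqrt (by positivity), d2K, ικ_add, ικ_add,
    ικ_ksq, ικ_ksq, ικ_ksq, ικ_sub, ικ_sub, ικ_sub]
  ring

lemma dist_emb_two_iff (p q : P) : dist (emb p) (emb q) = 2 ↔ d2K p q = (16, 0) := by
  constructor
  · intro h
    apply ικ_inj
    have h2 : ικ (d2K p q) / 2 = 4 := by rw [← dist_emb_sq, h]; norm_num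
    have : ικ ((16, 0) : K) = 8 := by norm_num [ικ]
    rw [this]; linarith
  · intro h
    have h2 : dist (emb p) (emb q) ^ 2 = 4 := by
      rw [dist_emb_sq, h]; norm_num [ικ]
    nlinarith [dist_nonneg (x := emb p) (y := emb q)]

/-- The vertex set `VI` is the image of the twelve model points. -/
lemma VI_eq : VI = emb '' (LP.toFinset : Set P) := by
  ext x
  constructor
  · rintro ⟨a, ha, b, hb, h⟩
    simp only [sgn, Set.mem_insert_iff, Set.mem_singleton_iff] at ha hb
    rcases ha with rfl | rfl <;> rcases hb with rfl | rfl <;>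
        rcases h with rfl | rfl | rfl
    · exact ⟨(zK, mK, hK), by decide, by
        rw [emb, pt_ext]; refine ⟨ικ_z, ικ_m, ?_⟩; rw [ικ_h]; ring⟩
    · exact ⟨(mK, hK, zK), by decide, by
        rw [emb, pt_ext]; refine ⟨ικ_m, ?_, ικ_z⟩; rw [ικ_h]; ring⟩
    · exact ⟨(hK, zK, mK), by decide, by
        rw [emb, pt_ext]; refine ⟨?_, ικ_z, ικ_m⟩; rw [ικ_h]; ring⟩
    · exact ⟨(zK, mK, gK), by decide, by
        rw [emb, pt_ext]; refine ⟨ικ_z, ικ_m, ?_⟩; rw [ικ_g]; ring⟩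
    · exact ⟨(mK, gK, zK), by decide, by
        rw [emb, pt_ext]; refine ⟨ικ_m, ?_, ικ_z⟩; rw [ικ_g]; ring⟩
    · exact ⟨(hK, zK, oK), by decide, by
        rw [emb, pt_ext]; refine ⟨?_, ικ_z, ικ_o⟩; rw [ικ_h]; ring⟩
    · exact ⟨(zK, oK, hK), by decide, by
        rw [emb, pt_ext]; refine ⟨ικ_z, ικ_o, ?_⟩; rw [ικ_h]; ring⟩
    · exact ⟨(oK, hK, zK), by decide, by
        rw [emb, pt_ext]; refine ⟨ικ_o, ?_, ικ_z⟩; rw [ικ_h]; ring⟩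
    · exact ⟨(gK, zK, mK), by decide, by
        rw [emb, pt_ext]; refine ⟨?_, ικ_z, ικ_m⟩; rw [ικ_g]; ring⟩
    · exact ⟨(zK, oK, gK), by decide, by
        rw [emb, pt_ext]; refine ⟨ικ_z, ικ_o, ?_⟩; rw [ικ_g]; ring⟩
    · exact ⟨(oK, gK, zK), by decide, by
        rw [emb, pt_ext]; refine ⟨ικ_o, ?_, ικ_z⟩; rw [ικ_g]; ring⟩
    · exact ⟨(gK, zK, oK), by decide, by
        rw [emb, pt_ext]; refine ⟨?_, ικ_z, ικ_o⟩; rw [ικ_g]; ring⟩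
  · rintro ⟨w, hw, rfl⟩
    rw [Finset.mem_coe, List.mem_toFinset] at hw
    have m1 : (-1 : ℝ) ∈ sgn := Or.inl rfl
    have p1 : (1 : ℝ) ∈ sgn := Or.inr rfl
    simp only [LP, List.mem_cons, List.not_mem_nil, or_false] at hw
    rcases hw with rfl | rfl | rfl | rfl | rfl | rfl | rfl | rfl | rfl | rfl | rfl | rfl
    · exact ⟨1, p1, 1, p1, Or.inl (by
        rw [emb, pt_ext]; refine ⟨ικ_z, ικ_o, ?_⟩; rw [ικ_g]; ring)⟩
    · exact ⟨1, p1, -1, m1, Or.inl (by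
        rw [emb, pt_ext]; refine ⟨ικ_z, ικ_o, ?_⟩; rw [ικ_h]; ring)⟩
    · exact ⟨-1, m1, 1, p1, Or.inl (by
        rw [emb, pt_ext]; refine ⟨ικ_z, ικ_m, ?_⟩; rw [ικ_g]; ring)⟩
    · exact ⟨-1, m1, -1, m1, Or.inl (by
        rw [emb, pt_ext]; refine ⟨ικ_z, ικ_m, ?_⟩; rw [ικ_h]; ring)⟩
    · exact ⟨1, p1, 1, p1, Or.inr (Or.inl (by
        rw [emb, pt_ext]; refine ⟨ικ_o, ?_, ικ_z⟩; rw [ικ_g]; ring))⟩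
    · exact ⟨1, p1, -1, m1, Or.inr (Or.inl (by
        rw [emb, pt_ext]; refine ⟨ικ_o, ?_, ικ_z⟩; rw [ικ_h]; ring))⟩
    · exact ⟨-1, m1, 1, p1, Or.inr (Or.inl (by
        rw [emb, pt_ext]; refine ⟨ικ_m, ?_, ικ_z⟩; rw [ικ_g]; ring))⟩
    · exact ⟨-1, m1, -1, m1, Or.inr (Or.inl (by
        rw [emb, pt_ext]; refine ⟨ικ_m, ?_, ικ_z⟩; rw [ικ_h]; ring))⟩
    · exact ⟨1, p1, 1, p1, Or.inr (Or.inr (by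
        rw [emb, pt_ext]; refine ⟨?_, ικ_z, ικ_o⟩; rw [ικ_g]; ring))⟩
    · exact ⟨1, p1, -1, m1, Or.inr (Or.inr (by
        rw [emb, pt_ext]; refine ⟨?_, ικ_z, ικ_m⟩; rw [ικ_g]; ring))⟩
    · exact ⟨-1, m1, 1, p1, Or.inr (Or.inr (by
        rw [emb, pt_ext]; refine ⟨?_, ικ_z, ικ_o⟩; rw [ικ_h]; ring))⟩
    · exact ⟨-1, m1, -1, m1, Or.inr (Or.inr (by
        rw [emb, pt_ext]; refine ⟨?_, ικ_z, ικ_m⟩; rw [ικ_h]; ring))⟩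
end IcoAux

open IcoAux in
lemma sphere_center_inj {w w' : E3} (r : ℝ) (hr : 0 < r)
    (h : (Metric.sphere w r : Set E3) = Metric.sphere w' r) : w = w' := by
  by_contra hne
  have hv : w' - w ≠ 0 := sub_ne_zero.mpr (Ne.symm hne)
  set n : ℝ := ‖w' - w‖ with hn
  have hn0 : 0 < n := norm_pos_iff.mpr hv
  have h1 : dist (w - (r / n) • (w' - w)) w = r := by
    rw [dist_eq_norm, show w - (r / n) • (w' - w) - w = -((r / n) • (w' - w)) by abel,
      norm_neg, norm_smul, Real.norm_eq_abs, abs_of_pos (by positivity)]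
    field_simp
    exact hn.symm
  have hmem : (w - (r / n) • (w' - w)) ∈ (Metric.sphere w' r : Set E3) := by
    rw [← h]; exact Metric.mem_sphere.mpr h1
  have h2 : dist (w - (r / n) • (w' - w)) w' = r := Metric.mem_sphere.mp hmem
  rw [dist_eq_norm, show w - (r / n) • (w' - w) - w' = -((1 + r / n) • (w' - w)) by module,
    norm_neg, norm_smul, Real.norm_eq_abs, abs_of_pos (by positivity)] at h2
  have : (1 + r / n) * n = n + r := by field_simp
  rw [this] at h2
  linarith

/-- Proposition 2 of the paper for the regular icosahedron: the vertices together with the spheres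
centered at the vertices with radius the minimal vertex distance form a (12_5)
configuration of points and spheres whose symmetry group is the full symmetry group
of the regular icosahedron. -/
theorem icosahedron_sphere_configuration :
    IsLeast {d : ℝ | ∃ p ∈ VI, ∃ q ∈ VI, p ≠ q ∧ d = dist p q} ((2 : ℝ)) ∧
    VI.ncard = 12 ∧
    ((fun w => (Metric.sphere w ((2 : ℝ)) : Set E3)) '' VI).ncard = 12 ∧
    (∀ w ∈ VI, (VI ∩ Metric.sphere w ((2 : ℝ))).ncard = 5) ∧
    (∀ v ∈ VI, {w ∈ VI | v ∈ Metric.sphere w ((2 : ℝ))}.ncard = 5) ∧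
    (∀ g : E3 ≃ᵢ E3,
      (g '' VI = VI ∧ ∀ w ∈ VI, ∃ w' ∈ VI,
        g '' (Metric.sphere w ((2 : ℝ)) : Set E3) = Metric.sphere w' ((2 : ℝ))) ↔
      g '' VI = VI) := by
  have hcard : VI.ncard = 12 := by
    rw [IcoAux.VI_eq, Set.ncard_image_of_injective _ IcoAux.emb_inj,
      Set.ncard_coe_finset, IcoAux.LP_card]
  refine ⟨⟨?_, ?_⟩, hcard, ?_, ?_, ?_, ?_⟩
  · -- 2 is attained
    refine ⟨IcoAux.emb (IcoAux.zK, IcoAux.oK, IcoAux.gK), ?_,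
      IcoAux.emb (IcoAux.oK, IcoAux.gK, IcoAux.zK), ?_, ?_, ?_⟩
    · rw [IcoAux.VI_eq]
      exact Set.mem_image_of_mem _ (Finset.mem_coe.mpr (by decide))
    · rw [IcoAux.VI_eq]
      exact Set.mem_image_of_mem _ (Finset.mem_coe.mpr (by decide))
    · intro hEq
      exact absurd (IcoAux.emb_inj hEq) (by decide)
    · exact ((IcoAux.dist_emb_two_iff _ _).mpr IcoAux.LP_adj).symm
  · -- 2 is a lower bound
    rintro d ⟨p, hp, q, hq, hne, rfl⟩
    rw [IcoAux.VI_eq] at hp hq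
    obtain ⟨p0, hp0, rfl⟩ := hp
    obtain ⟨q0, hq0, rfl⟩ := hq
    rw [Finset.mem_coe, List.mem_toFinset] at hp0 hq0
    have hsq := IcoAux.dist_emb_sq p0 q0
    have hd0 : (0 : ℝ) ≤ dist (IcoAux.emb p0) (IcoAux.emb q0) := dist_nonneg
    rcases IcoAux.LP_d2 p0 hp0 q0 hq0 with h | h | h | h
    · exact absurd (congrArg IcoAux.emb h) hne
    all_goals rw [h] at hsq
    all_goals norm_num [IcoAux.ικ] at hsq
    all_goals nlinarith [hsq, IcoAux.sqrt5_gt, hd0]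
  · -- 12 spheres
    rw [Set.ncard_image_of_injOn (fun a _ b _ h => sphere_center_inj 2 (by norm_num) h), hcard]
  · -- each sphere contains 5 vertices
    intro w hw
    rw [IcoAux.VI_eq] at hw
    obtain ⟨w0, hw0, rfl⟩ := hw
    have hset : VI ∩ Metric.sphere (IcoAux.emb w0) 2 =
        IcoAux.emb '' ((IcoAux.LP.toFinset.filter
          (fun p => IcoAux.d2K p w0 = (16, 0))) : Set IcoAux.P) := by
      rw [IcoAux.VI_eq]
      ext x
      simp only [Set.mem_inter_iff, Set.mem_image, Finset.mem_coe, Finset.mem_filter,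
        Metric.mem_sphere]
      constructor
      · rintro ⟨⟨p, hp, rfl⟩, hd⟩
        exact ⟨p, ⟨hp, (IcoAux.dist_emb_two_iff _ _).mp hd⟩, rfl⟩
      · rintro ⟨p, ⟨hp, hd⟩, rfl⟩
        exact ⟨⟨p, hp, rfl⟩, (IcoAux.dist_emb_two_iff _ _).mpr hd⟩
    rw [hset, Set.ncard_image_of_injective _ IcoAux.emb_inj, Set.ncard_coe_finset]
    exact IcoAux.LP_deg1 w0 hw0
  · -- each vertex lies on 5 spheres
    intro v hv
    rw [IcoAux.VI_eq] at hv
    obtain ⟨v0, hv0, rfl⟩ := hv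
    have hset : {w ∈ VI | IcoAux.emb v0 ∈ Metric.sphere w (2 : ℝ)} =
        IcoAux.emb '' ((IcoAux.LP.toFinset.filter
          (fun w => IcoAux.d2K v0 w = (16, 0))) : Set IcoAux.P) := by
      rw [IcoAux.VI_eq]
      ext x
      simp only [Set.mem_setOf_eq, Set.mem_image, Finset.mem_coe, Finset.mem_filter,
        Metric.mem_sphere]
      constructor
      · rintro ⟨⟨p, hp, rfl⟩, hd⟩
        exact ⟨p, ⟨hp, (IcoAux.dist_emb_two_iff _ _).mp hd⟩, rfl⟩
      · rintro ⟨p, ⟨hp, hd⟩, rfl⟩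
        exact ⟨⟨p, hp, rfl⟩, (IcoAux.dist_emb_two_iff _ _).mpr hd⟩
    rw [hset, Set.ncard_image_of_injective _ IcoAux.emb_inj, Set.ncard_coe_finset]
    exact IcoAux.LP_deg2 v0 hv0
  · -- symmetry group
    intro g
    constructor
    · exact And.left
    · intro h
      refine ⟨h, fun w hw => ⟨g w, ?_, ?_⟩⟩
      · rw [← h]; exact Set.mem_image_of_mem g hw
      · exact g.image_sphere w 2
end
end

section
/- There exists a connected (48_3) geometric configuration Z = (P, L) of points and lines in ℝ³ such that the group of isometries of ℝ³ preserving Z equals Sym_R(T), the group of orientation-preserving isometries g of ℝ³ with g(V_T) = V_T, where V_T = {(1,1,1), (1,−1,−1), (−1,1,−1), (−1,−1,1)} is the vertex set of a regular tetrahedron. -/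
noncomputable section

-- core geometry
def toE (w : Fin 3 → ℤ) : E3 := WithLp.toLp 2 (fun j => (w j : ℝ))

def lineThrough (p q : E3) : Set E3 := {x | ∃ t : ℝ, x = p + t • (q - p)}

def colin (a b x : Fin 3 → ℤ) : Prop :=
  (x 1 - a 1) * (b 2 - a 2) = (x 2 - a 2) * (b 1 - a 1) ∧
  (x 0 - a 0) * (b 2 - a 2) = (x 2 - a 2) * (b 0 - a 0) ∧
  (x 0 - a 0) * (b 1 - a 1) = (x 1 - a 1) * (b 0 - a 0)

instance colin.dec (a b x : Fin 3 → ℤ) : Decidable (colin a b x) := by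
  unfold colin; infer_instance

lemma toE_inj : Function.Injective toE := by
  intro w w' h
  funext j
  have : (w j : ℝ) = (w' j : ℝ) := congrArg (· j) h
  exact_mod_cast this

lemma mem_lineThrough_left (p q : E3) : p ∈ lineThrough p q := ⟨0, by simp⟩
lemma mem_lineThrough_right (p q : E3) : q ∈ lineThrough p q := ⟨1, by simp⟩

lemma toE_mem_line_iff {a b x : Fin 3 → ℤ} (hab : a ≠ b) :
    toE x ∈ lineThrough (toE a) (toE b) ↔ colin a b x := by
  constructor
  · rintro ⟨t, ht⟩
    have e0 : (x 0 : ℝ) = a 0 + t * (b 0 - a 0) := congrArg (· 0) ht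
    have e1 : (x 1 : ℝ) = a 1 + t * (b 1 - a 1) := congrArg (· 1) ht
    have e2 : (x 2 : ℝ) = a 2 + t * (b 2 - a 2) := congrArg (· 2) ht
    refine ⟨?_, ?_, ?_⟩
    · exact_mod_cast (by linear_combination ((b 2 : ℝ) - a 2) * e1 - ((b 1 : ℝ) - a 1) * e2 :
        ((x 1 : ℝ) - a 1) * ((b 2 : ℝ) - a 2) = ((x 2 : ℝ) - a 2) * ((b 1 : ℝ) - a 1))
    · exact_mod_cast (by linear_combination ((b 2 : ℝ) - a 2) * e0 - ((b 0 : ℝ) - a 0) * e2 :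
        ((x 0 : ℝ) - a 0) * ((b 2 : ℝ) - a 2) = ((x 2 : ℝ) - a 2) * ((b 0 : ℝ) - a 0))
    · exact_mod_cast (by linear_combination ((b 1 : ℝ) - a 1) * e0 - ((b 0 : ℝ) - a 0) * e1 :
        ((x 0 : ℝ) - a 0) * ((b 1 : ℝ) - a 1) = ((x 1 : ℝ) - a 1) * ((b 0 : ℝ) - a 0))
  · rintro ⟨c1, c2, c3⟩
    have rc1 : ((x 1 : ℝ) - a 1) * ((b 2 : ℝ) - a 2) = ((x 2 : ℝ) - a 2) * ((b 1 : ℝ) - a 1) := by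
      exact_mod_cast c1
    have rc2 : ((x 0 : ℝ) - a 0) * ((b 2 : ℝ) - a 2) = ((x 2 : ℝ) - a 2) * ((b 0 : ℝ) - a 0) := by
      exact_mod_cast c2
    have rc3 : ((x 0 : ℝ) - a 0) * ((b 1 : ℝ) - a 1) = ((x 1 : ℝ) - a 1) * ((b 0 : ℝ) - a 0) := by
      exact_mod_cast c3
    have hk : ∃ k : Fin 3, b k ≠ a k := by
      by_contra h
      push_neg at h
      exact hab (funext fun j => by have := h j; omega)
    obtain ⟨k, hk⟩ := hk
    have hbk : ((b k : ℝ) - a k) ≠ 0 := fun h => hk (by exact_mod_cast sub_eq_zero.mp h)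
    refine ⟨((x k : ℝ) - a k) / ((b k : ℝ) - a k), ?_⟩
    ext j
    have hgoal : ∀ (u v : Fin 3), ((b u : ℝ) - a u) ≠ 0 →
        ((x u : ℝ) - a u) * ((b v : ℝ) - a v) = ((x v : ℝ) - a v) * ((b u : ℝ) - a u) →
        (x v : ℝ) = a v + ((x u : ℝ) - a u) / ((b u : ℝ) - a u) * ((b v : ℝ) - a v) := by
      intro u v hu hr
      rw [div_mul_eq_mul_div, hr, mul_div_assoc, div_self hu, mul_one]
      ring
    show (x j : ℝ) = toE a j + (((x k : ℝ) - a k) / ((b k : ℝ) - a k)) * ((toE b - toE a) j)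
    have hrw : (toE b - toE a) j = ((b j : ℝ) - a j) := rfl
    rw [hrw]
    refine hgoal k j hbk ?_
    have h3 : ∀ m : Fin 3, m = 0 ∨ m = 1 ∨ m = 2 := by decide
    rcases h3 k with rfl | rfl | rfl <;> rcases h3 j with rfl | rfl | rfl <;>
      first
        | ring1
        | linear_combination rc1 | linear_combination -rc1
        | linear_combination rc2 | linear_combination -rc2
        | linear_combination rc3 | linear_combination -rc3

lemma lineThrough_subset {p q c d : E3} (hc : c ∈ lineThrough p q) (hd : d ∈ lineThrough p q) :
    lineThrough c d ⊆ lineThrough p q := by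
  obtain ⟨s, hs⟩ := hc; obtain ⟨u, hu⟩ := hd
  rintro x ⟨t, ht⟩
  exact ⟨s + t * (u - s), by rw [ht, hs, hu]; ext j; simp; ring⟩

lemma lineThrough_eq {p q c d : E3} (hc : c ∈ lineThrough p q) (hd : d ∈ lineThrough p q)
    (hcd : c ≠ d) : lineThrough c d = lineThrough p q := by
  obtain ⟨s, hs⟩ := hc; obtain ⟨u, hu⟩ := hd
  refine le_antisymm (lineThrough_subset ⟨s, hs⟩ ⟨u, hu⟩) ?_
  have hus : u - s ≠ 0 := by
    intro h
    apply hcd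
    rw [hs, hu, sub_eq_zero.mp h]
  rintro x ⟨t, ht⟩
  refine ⟨(t - s) / (u - s), ?_⟩
  rw [ht, hs, hu]
  ext j
  simp
  field_simp
  ring
lemma lineThrough_inter {p q r s x y : E3}
    (hne : lineThrough p q ≠ lineThrough r s)
    (hx1 : x ∈ lineThrough p q) (hx2 : x ∈ lineThrough r s)
    (hy1 : y ∈ lineThrough p q) (hy2 : y ∈ lineThrough r s) : x = y := by
  by_contra hxy
  exact hne ((lineThrough_eq hx1 hy1 hxy).symm.trans (lineThrough_eq hx2 hy2 hxy))

def mvec (M : Fin 3 → Fin 3 → ℤ) (w : Fin 3 → ℤ) : Fin 3 → ℤ :=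
  fun i => M i 0 * w 0 + M i 1 * w 1 + M i 2 * w 2
def nsq (w : Fin 3 → ℤ) : ℤ := w 0 * w 0 + w 1 * w 1 + w 2 * w 2
def idet (M : Fin 3 → Fin 3 → ℤ) : ℤ :=
  M 0 0 * (M 1 1 * M 2 2 - M 1 2 * M 2 1) - M 0 1 * (M 1 0 * M 2 2 - M 1 2 * M 2 0) +
    M 0 2 * (M 1 0 * M 2 1 - M 1 1 * M 2 0)
def Pv : Fin 48 → Fin 3 → ℤ :=
  ![![1,1,1],
    ![1,-1,-1],
    ![-1,1,-1],
    ![-1,-1,1],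
    ![-3,-3,-3],
    ![-3,3,3],
    ![3,-3,3],
    ![3,3,-3],
    ![-6,-6,-6],
    ![-6,6,6],
    ![6,-6,6],
    ![6,6,-6],
    ![-6,-6,0],
    ![-6,0,-6],
    ![-6,0,6],
    ![-6,6,0],
    ![0,-6,-6],
    ![0,-6,6],
    ![0,6,-6],
    ![0,6,6],
    ![6,-6,0],
    ![6,0,-6],
    ![6,0,6],
    ![6,6,0],
    ![-8,-2,-4],
    ![-8,2,4],
    ![-4,-8,-2],
    ![-4,8,2],
    ![-2,-4,-8],
    ![-2,4,8],
    ![2,-4,8],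
    ![2,4,-8],
    ![4,-8,2],
    ![4,8,-2],
    ![8,-2,4],
    ![8,2,-4],
    ![-12,-6,0],
    ![-12,6,0],
    ![-6,0,-12],
    ![-6,0,12],
    ![0,-12,-6],
    ![0,-12,6],
    ![0,12,-6],
    ![0,12,6],
    ![6,0,-12],
    ![6,0,12],
    ![12,-6,0],
    ![12,6,0]]

def LAi : Fin 48 → Fin 48 := ![0,0,0,1,1,1,2,2,2,3,3,3,4,4,4,5,5,5,6,6,6,7,7,7,8,8,8,9,9,9,10,10,10,11,11,11,12,13,14,15,16,17,18,19,20,21,22,23]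

def LBi : Fin 48 → Fin 48 := ![14,18,20,13,17,23,12,19,21,15,16,22,15,17,21,12,18,22,14,16,23,13,19,20,24,26,28,25,27,29,30,32,34,31,33,35,26,24,25,27,28,30,31,29,32,35,34,33]

def CMat : Fin 24 → Fin 3 → Fin 3 → ℤ :=
  ![![![1,0,0],![0,1,0],![0,0,1]],
    ![![0,0,1],![1,0,0],![0,1,0]],
    ![![0,1,0],![0,0,1],![1,0,0]],
    ![![1,0,0],![0,-1,0],![0,0,-1]],
    ![![0,1,0],![0,0,-1],![-1,0,0]],
    ![![0,0,1],![-1,0,0],![0,-1,0]],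
    ![![0,0,-1],![1,0,0],![0,-1,0]],
    ![![0,-1,0],![0,0,1],![-1,0,0]],
    ![![-1,0,0],![0,1,0],![0,0,-1]],
    ![![0,-1,0],![0,0,-1],![1,0,0]],
    ![![0,0,-1],![-1,0,0],![0,1,0]],
    ![![-1,0,0],![0,-1,0],![0,0,1]],
    ![![1,0,0],![0,0,1],![0,1,0]],
    ![![0,1,0],![1,0,0],![0,0,1]],
    ![![0,0,1],![0,1,0],![1,0,0]],
    ![![1,0,0],![0,0,-1],![0,-1,0]],
    ![![0,0,1],![0,-1,0],![-1,0,0]],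
    ![![0,1,0],![-1,0,0],![0,0,-1]],
    ![![0,-1,0],![1,0,0],![0,0,-1]],
    ![![0,0,-1],![0,1,0],![-1,0,0]],
    ![![-1,0,0],![0,0,1],![0,-1,0]],
    ![![0,0,-1],![0,-1,0],![1,0,0]],
    ![![0,-1,0],![-1,0,0],![0,0,1]],
    ![![-1,0,0],![0,0,-1],![0,1,0]]]

def PPerm : Fin 12 → Fin 48 → Fin 48 :=
  ![![0,1,2,3,4,5,6,7,8,9,10,11,12,13,14,15,16,17,18,19,20,21,22,23,24,25,26,27,28,29,30,31,32,33,34,35,36,37,38,39,40,41,42,43,44,45,46,47],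
    ![0,2,3,1,4,6,7,5,8,10,11,9,16,12,20,17,13,21,14,22,18,15,23,19,26,32,28,30,24,34,35,25,31,29,33,27,40,41,36,46,38,44,39,45,37,47,42,43],
    ![0,3,1,2,4,7,5,6,8,11,9,10,13,16,18,21,12,15,20,23,14,17,19,22,28,31,24,35,26,33,27,32,25,34,29,30,38,44,40,42,36,37,46,47,41,43,39,45],
    ![1,0,3,2,5,4,7,6,9,8,11,10,15,14,13,12,19,18,17,16,23,22,21,20,25,24,27,26,29,28,31,30,33,32,35,34,37,36,39,38,43,42,41,40,45,44,47,46],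
    ![1,2,0,3,5,6,4,7,9,10,8,11,14,19,17,22,15,12,23,20,13,18,16,21,29,30,25,34,27,32,26,33,24,35,28,31,39,45,43,41,37,36,47,46,42,40,38,44],
    ![1,3,2,0,5,7,6,4,9,11,10,8,19,15,23,18,14,22,13,21,17,12,20,16,27,33,29,31,25,35,34,24,30,28,32,26,43,42,37,47,39,45,38,44,36,46,41,40],
    ![2,0,1,3,6,4,5,7,10,8,9,11,17,20,12,16,22,14,21,13,19,23,15,18,32,26,30,28,34,24,25,35,29,31,27,33,41,40,46,36,45,39,44,38,47,37,43,42],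
    ![2,1,3,0,6,5,7,4,10,9,11,8,22,17,19,14,20,23,12,15,21,16,18,13,30,29,34,25,32,27,33,26,35,24,31,28,45,39,41,43,46,47,36,37,40,42,44,38],
    ![2,3,0,1,6,7,4,5,10,11,8,9,20,22,21,23,17,16,19,18,12,14,13,15,34,35,32,33,30,31,28,29,26,27,24,25,46,47,45,44,41,40,43,42,39,38,36,37],
    ![3,0,2,1,7,4,6,5,11,8,10,9,21,18,16,13,23,20,15,12,22,19,17,14,31,28,35,24,33,26,32,27,34,25,30,29,44,38,42,40,47,46,37,36,43,41,45,39],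
    ![3,1,0,2,7,5,4,6,11,9,8,10,18,23,15,19,21,13,22,14,16,20,12,17,33,27,31,29,35,25,24,34,28,30,26,32,42,43,47,37,44,38,45,39,46,36,40,41],
    ![3,2,1,0,7,6,5,4,11,10,9,8,23,21,22,20,18,19,16,17,15,13,14,12,35,34,33,32,31,30,29,28,27,26,25,24,47,46,44,45,42,43,40,41,38,39,37,36]]

def PPermInv : Fin 12 → Fin 48 → Fin 48 :=
  ![![0,1,2,3,4,5,6,7,8,9,10,11,12,13,14,15,16,17,18,19,20,21,22,23,24,25,26,27,28,29,30,31,32,33,34,35,36,37,38,39,40,41,42,43,44,45,46,47],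
    ![0,3,1,2,4,7,5,6,8,11,9,10,13,16,18,21,12,15,20,23,14,17,19,22,28,31,24,35,26,33,27,32,25,34,29,30,38,44,40,42,36,37,46,47,41,43,39,45],
    ![0,2,3,1,4,6,7,5,8,10,11,9,16,12,20,17,13,21,14,22,18,15,23,19,26,32,28,30,24,34,35,25,31,29,33,27,40,41,36,46,38,44,39,45,37,47,42,43],
    ![1,0,3,2,5,4,7,6,9,8,11,10,15,14,13,12,19,18,17,16,23,22,21,20,25,24,27,26,29,28,31,30,33,32,35,34,37,36,39,38,43,42,41,40,45,44,47,46],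
    ![2,0,1,3,6,4,5,7,10,8,9,11,17,20,12,16,22,14,21,13,19,23,15,18,32,26,30,28,34,24,25,35,29,31,27,33,41,40,46,36,45,39,44,38,47,37,43,42],
    ![3,0,2,1,7,4,6,5,11,8,10,9,21,18,16,13,23,20,15,12,22,19,17,14,31,28,35,24,33,26,32,27,34,25,30,29,44,38,42,40,47,46,37,36,43,41,45,39],
    ![1,2,0,3,5,6,4,7,9,10,8,11,14,19,17,22,15,12,23,20,13,18,16,21,29,30,25,34,27,32,26,33,24,35,28,31,39,45,43,41,37,36,47,46,42,40,38,44],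
    ![3,1,0,2,7,5,4,6,11,9,8,10,18,23,15,19,21,13,22,14,16,20,12,17,33,27,31,29,35,25,24,34,28,30,26,32,42,43,47,37,44,38,45,39,46,36,40,41],
    ![2,3,0,1,6,7,4,5,10,11,8,9,20,22,21,23,17,16,19,18,12,14,13,15,34,35,32,33,30,31,28,29,26,27,24,25,46,47,45,44,41,40,43,42,39,38,36,37],
    ![1,3,2,0,5,7,6,4,9,11,10,8,19,15,23,18,14,22,13,21,17,12,20,16,27,33,29,31,25,35,34,24,30,28,32,26,43,42,37,47,39,45,38,44,36,46,41,40],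
    ![2,1,3,0,6,5,7,4,10,9,11,8,22,17,19,14,20,23,12,15,21,16,18,13,30,29,34,25,32,27,33,26,35,24,31,28,45,39,41,43,46,47,36,37,40,42,44,38],
    ![3,2,1,0,7,6,5,4,11,10,9,8,23,21,22,20,18,19,16,17,15,13,14,12,35,34,33,32,31,30,29,28,27,26,25,24,47,46,44,45,42,43,40,41,38,39,37,36]]

def LPerm : Fin 12 → Fin 48 → Fin 48 :=
  ![![0,1,2,3,4,5,6,7,8,9,10,11,12,13,14,15,16,17,18,19,20,21,22,23,24,25,26,27,28,29,30,31,32,33,34,35,36,37,38,39,40,41,42,43,44,45,46,47],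
    ![2,0,1,6,8,7,10,11,9,4,3,5,13,14,12,19,18,20,23,21,22,15,17,16,25,26,24,31,30,32,35,33,34,27,29,28,40,36,44,41,37,45,38,46,42,39,47,43],
    ![1,2,0,10,9,11,3,5,4,8,6,7,14,12,13,21,23,22,16,15,17,19,20,18,26,24,25,33,35,34,28,27,29,31,32,30,37,40,42,45,36,39,44,47,38,41,43,46],
    ![3,4,5,0,1,2,9,10,11,6,7,8,15,16,17,12,13,14,21,22,23,18,19,20,27,28,29,24,25,26,33,34,35,30,31,32,39,38,37,36,43,42,41,40,47,46,45,44],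
    ![4,5,3,7,6,8,0,2,1,11,9,10,17,15,16,18,20,19,13,12,14,22,23,21,29,27,28,30,32,31,25,24,26,34,35,33,38,43,41,46,39,36,47,44,37,42,40,45],
    ![5,3,4,9,11,10,7,8,6,1,0,2,16,17,15,22,21,23,20,18,19,12,14,13,28,29,27,34,33,35,32,30,31,24,26,25,43,39,47,42,38,46,37,45,41,36,44,40],
    ![6,8,7,2,0,1,4,3,5,10,11,9,19,18,20,13,14,12,15,17,16,23,21,22,31,30,32,25,26,24,27,29,28,35,33,34,41,44,36,40,46,38,45,37,43,47,39,42],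
    ![7,6,8,4,5,3,11,9,10,0,2,1,18,20,19,17,15,16,22,23,21,13,12,14,30,32,31,29,27,28,34,35,33,25,24,26,46,41,43,38,44,47,36,39,45,40,42,37],
    ![8,7,6,11,10,9,2,1,0,5,4,3,20,19,18,23,22,21,14,13,12,17,16,15,32,31,30,35,34,33,26,25,24,29,28,27,44,46,45,47,41,40,43,42,36,38,37,39],
    ![10,9,11,1,2,0,8,6,7,3,5,4,21,23,22,14,12,13,19,20,18,16,15,17,33,35,34,26,24,25,31,32,30,28,27,29,45,42,40,37,47,44,39,36,46,43,41,38],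
    ![9,11,10,5,3,4,1,0,2,7,8,6,22,21,23,16,17,15,12,14,13,20,18,19,34,33,35,28,29,27,24,26,25,32,30,31,42,47,39,43,45,37,46,38,40,44,36,41],
    ![11,10,9,8,7,6,5,4,3,2,1,0,23,22,21,20,19,18,17,16,15,14,13,12,35,34,33,32,31,30,29,28,27,26,25,24,47,45,46,44,42,43,40,41,39,37,38,36]]

def WitIdx : Fin 12 → Fin 48 := ![24,24,24,24,24,24,24,24,24,24,24,24]
set_option maxRecDepth 100000
lemma hPvInj : ∀ i j : Fin 48, Pv i = Pv j → i = j := by decide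
lemma hAB : ∀ l : Fin 48, Pv (LAi l) ≠ Pv (LBi l) := by decide
lemma hVal3 : ∀ i : Fin 48,
    (Finset.univ.filter (fun l => colin (Pv (LAi l)) (Pv (LBi l)) (Pv i))).card = 3 := by decide
lemma hInc3 : ∀ l : Fin 48,
    (Finset.univ.filter (fun i => colin (Pv (LAi l)) (Pv (LBi l)) (Pv i))).card = 3 := by decide
lemma hLnDist : ∀ l l' : Fin 48, l ≠ l' →
    ¬(colin (Pv (LAi l)) (Pv (LBi l)) (Pv (LAi l')) ∧
      colin (Pv (LAi l)) (Pv (LBi l)) (Pv (LBi l'))) := by decide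
lemma hShell : ∀ i : Fin 48, 4 ≤ i.val → nsq (Pv i) ≠ 3 := by decide
lemma hNsqVT : ∀ i : Fin 48, i.val < 4 → nsq (Pv i) = 3 := by decide
lemma hSum : ∀ j : Fin 3, (Finset.univ.sum fun i => Pv i j) = 0 := by decide
lemma hSumVT : ∀ j : Fin 3, (Finset.univ.sum fun i : Fin 4 => Pv (Fin.castLE (by omega) i) j) = 0 := by decide
lemma hWit : ∀ k : Fin 12, ∀ j : Fin 48,
    mvec (CMat ⟨12 + k.val, by omega⟩) (Pv (WitIdx k)) ≠ Pv j := by decide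
lemma hPP : ∀ k : Fin 12, ∀ i : Fin 48,
    mvec (CMat ⟨k.val, by omega⟩) (Pv i) = Pv (PPerm k i) := by decide
lemma hPPsurj : ∀ k : Fin 12, ∀ i : Fin 48, PPerm k (PPermInv k i) = i := by decide
lemma hPPne : ∀ k : Fin 12, ∀ l : Fin 48, Pv (PPerm k (LAi l)) ≠ Pv (PPerm k (LBi l)) := by decide
lemma hLL : ∀ k : Fin 12, ∀ l : Fin 48,
    colin (Pv (LAi (LPerm k l))) (Pv (LBi (LPerm k l))) (Pv (PPerm k (LAi l))) ∧
    colin (Pv (LAi (LPerm k l))) (Pv (LBi (LPerm k l))) (Pv (PPerm k (LBi l))) := by decide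
lemma hDetP : ∀ k : Fin 12, idet (CMat ⟨k.val, by omega⟩) = 1 := by decide
lemma hDetI : ∀ k : Fin 12, idet (CMat ⟨12 + k.val, by omega⟩) = -1 := by decide


-- § configuration
def Pset : Set E3 := Set.range (fun i => toE (Pv i))
def Ln (l : Fin 48) : Set E3 := lineThrough (toE (Pv (LAi l))) (toE (Pv (LBi l)))
def Lset : Set (Set E3) := Set.range Ln

lemma toE_Pv_inj : Function.Injective (fun i : Fin 48 => toE (Pv i)) :=
  fun i j h => hPvInj i j (toE_inj h)

lemma endpoint_ne (l : Fin 48) : toE (Pv (LAi l)) ≠ toE (Pv (LBi l)) :=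
  fun h => hAB l (toE_inj h)

lemma mem_Ln_iff (i l : Fin 48) :
    toE (Pv i) ∈ Ln l ↔ colin (Pv (LAi l)) (Pv (LBi l)) (Pv i) :=
  toE_mem_line_iff (hAB l)

lemma Ln_inj : Function.Injective Ln := by
  intro l l' h
  by_contra hne
  refine hLnDist l l' hne ⟨?_, ?_⟩
  · exact (mem_Ln_iff (LAi l') l).mp (h ▸ mem_lineThrough_left _ _)
  · exact (mem_Ln_iff (LBi l') l).mp (h ▸ mem_lineThrough_right _ _)

def Zc : PLConfig where
  pts := Pset
  lns := Lset
  pts_finite := Set.finite_range _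
  lns_finite := Set.finite_range _
  lns_line := by
    rintro l ⟨j, rfl⟩
    exact ⟨toE (Pv (LAi j)), toE (Pv (LBi j)) - toE (Pv (LAi j)),
      sub_ne_zero.mpr (endpoint_ne j).symm, rfl⟩
  lines_meet := by
    rintro l₁ ⟨j₁, rfl⟩ l₂ ⟨j₂, rfl⟩ hne x hx y hy
    exact lineThrough_inter hne hx.1.2 hx.2 hy.1.2 hy.2

lemma Zc_pts : Zc.pts = Pset := rfl
lemma Zc_lns : Zc.lns = Lset := rfl

lemma Pset_ncard : Pset.ncard = 48 := by
  have : Pset = (fun i : Fin 48 => toE (Pv i)) '' Set.univ := by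
    rw [Set.image_univ]; rfl
  rw [this, Set.ncard_image_of_injective _ toE_Pv_inj, Set.ncard_univ,
    Nat.card_eq_fintype_card, Fintype.card_fin]

lemma Lset_ncard : Lset.ncard = 48 := by
  have : Lset = Ln '' Set.univ := by rw [Set.image_univ]; rfl
  rw [this, Set.ncard_image_of_injective _ Ln_inj, Set.ncard_univ,
    Nat.card_eq_fintype_card, Fintype.card_fin]

lemma pointValence_eq (i : Fin 48) : Zc.pointValence (toE (Pv i)) = 3 := by
  unfold PLConfig.pointValence
  have hset : {l ∈ Zc.lns | toE (Pv i) ∈ l} =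
      Ln '' ↑(Finset.univ.filter (fun l => colin (Pv (LAi l)) (Pv (LBi l)) (Pv i))) := by
    ext s
    constructor
    · rintro ⟨⟨j, rfl⟩, hmem⟩
      exact ⟨j, by simpa using (mem_Ln_iff i j).mp hmem, rfl⟩
    · rintro ⟨j, hj, rfl⟩
      simp only [Finset.coe_filter, Finset.mem_univ, true_and, Set.mem_setOf_eq] at hj
      exact ⟨⟨j, rfl⟩, (mem_Ln_iff i j).mpr hj⟩
  rw [hset, Set.ncard_image_of_injective _ Ln_inj, Set.ncard_coe_finset, hVal3 i]

lemma lineValence_eq (l : Fin 48) : Zc.lineValence (Ln l) = 3 := by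
  unfold PLConfig.lineValence
  have hset : Zc.pts ∩ Ln l =
      (fun i : Fin 48 => toE (Pv i)) ''
        ↑(Finset.univ.filter (fun i => colin (Pv (LAi l)) (Pv (LBi l)) (Pv i))) := by
    ext y
    constructor
    · rintro ⟨⟨i, rfl⟩, hmem⟩
      exact ⟨i, by simpa using (mem_Ln_iff i l).mp hmem, rfl⟩
    · rintro ⟨i, hi, rfl⟩
      simp only [Finset.coe_filter, Finset.mem_univ, true_and, Set.mem_setOf_eq] at hi
      exact ⟨⟨i, rfl⟩, (mem_Ln_iff i l).mpr hi⟩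
  rw [hset, Set.ncard_image_of_injective _ toE_Pv_inj, Set.ncard_coe_finset, hInc3 l]

lemma Zc_balanced : Zc.IsBalanced 48 3 := by
  refine ⟨Pset_ncard, Lset_ncard, ?_, ?_⟩
  · rintro p ⟨i, rfl⟩
    exact pointValence_eq i
  · rintro l ⟨j, rfl⟩
    exact lineValence_eq j


-- § connectivity
def PTv (i : Fin 48) : E3 ⊕ Set E3 := Sum.inl (toE (Pv i))
def LNv (l : Fin 48) : E3 ⊕ Set E3 := Sum.inr (Ln l)

lemma adjPL (i l : Fin 48) (h : colin (Pv (LAi l)) (Pv (LBi l)) (Pv i)) :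
    Zc.LeviAdj (PTv i) (LNv l) :=
  ⟨⟨i, rfl⟩, ⟨l, rfl⟩, (mem_Ln_iff i l).mpr h⟩

lemma adjLP (i l : Fin 48) (h : colin (Pv (LAi l)) (Pv (LBi l)) (Pv i)) :
    Zc.LeviAdj (LNv l) (PTv i) :=
  ⟨⟨i, rfl⟩, ⟨l, rfl⟩, (mem_Ln_iff i l).mpr h⟩

lemma LeviAdj_symm : Symmetric Zc.LeviAdj := by
  rintro (p | l) (q | m) h
  · exact h.elim
  · exact h
  · exact h
  · exact h.elim

lemma reach_all : (∀ i : Fin 48, Relation.ReflTransGen Zc.LeviAdj (PTv 0) (PTv i)) ∧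
    (∀ l : Fin 48, Relation.ReflTransGen Zc.LeviAdj (PTv 0) (LNv l)) := by
  have rp0 : Relation.ReflTransGen Zc.LeviAdj (PTv 0) (PTv 0) := .refl
  have rl0 : Relation.ReflTransGen Zc.LeviAdj (PTv 0) (LNv 0) := rp0.tail (adjPL 0 0 (by decide))
  have rl1 : Relation.ReflTransGen Zc.LeviAdj (PTv 0) (LNv 1) := rp0.tail (adjPL 0 1 (by decide))
  have rl2 : Relation.ReflTransGen Zc.LeviAdj (PTv 0) (LNv 2) := rp0.tail (adjPL 0 2 (by decide))
  have rp14 : Relation.ReflTransGen Zc.LeviAdj (PTv 0) (PTv 14) := rl0.tail (adjLP 14 0 (by decide))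
  have rp35 : Relation.ReflTransGen Zc.LeviAdj (PTv 0) (PTv 35) := rl0.tail (adjLP 35 0 (by decide))
  have rp18 : Relation.ReflTransGen Zc.LeviAdj (PTv 0) (PTv 18) := rl1.tail (adjLP 18 1 (by decide))
  have rp30 : Relation.ReflTransGen Zc.LeviAdj (PTv 0) (PTv 30) := rl1.tail (adjLP 30 1 (by decide))
  have rp20 : Relation.ReflTransGen Zc.LeviAdj (PTv 0) (PTv 20) := rl2.tail (adjLP 20 2 (by decide))
  have rp27 : Relation.ReflTransGen Zc.LeviAdj (PTv 0) (PTv 27) := rl2.tail (adjLP 27 2 (by decide))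
  have rl18 : Relation.ReflTransGen Zc.LeviAdj (PTv 0) (LNv 18) := rp14.tail (adjPL 14 18 (by decide))
  have rl38 : Relation.ReflTransGen Zc.LeviAdj (PTv 0) (LNv 38) := rp14.tail (adjPL 14 38 (by decide))
  have rl35 : Relation.ReflTransGen Zc.LeviAdj (PTv 0) (LNv 35) := rp35.tail (adjPL 35 35 (by decide))
  have rl45 : Relation.ReflTransGen Zc.LeviAdj (PTv 0) (LNv 45) := rp35.tail (adjPL 35 45 (by decide))
  have rl16 : Relation.ReflTransGen Zc.LeviAdj (PTv 0) (LNv 16) := rp18.tail (adjPL 18 16 (by decide))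
  have rl42 : Relation.ReflTransGen Zc.LeviAdj (PTv 0) (LNv 42) := rp18.tail (adjPL 18 42 (by decide))
  have rl30 : Relation.ReflTransGen Zc.LeviAdj (PTv 0) (LNv 30) := rp30.tail (adjPL 30 30 (by decide))
  have rl41 : Relation.ReflTransGen Zc.LeviAdj (PTv 0) (LNv 41) := rp30.tail (adjPL 30 41 (by decide))
  have rl23 : Relation.ReflTransGen Zc.LeviAdj (PTv 0) (LNv 23) := rp20.tail (adjPL 20 23 (by decide))
  have rl44 : Relation.ReflTransGen Zc.LeviAdj (PTv 0) (LNv 44) := rp20.tail (adjPL 20 44 (by decide))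
  have rl28 : Relation.ReflTransGen Zc.LeviAdj (PTv 0) (LNv 28) := rp27.tail (adjPL 27 28 (by decide))
  have rl39 : Relation.ReflTransGen Zc.LeviAdj (PTv 0) (LNv 39) := rp27.tail (adjPL 27 39 (by decide))
  have rp6 : Relation.ReflTransGen Zc.LeviAdj (PTv 0) (PTv 6) := rl18.tail (adjLP 6 18 (by decide))
  have rp46 : Relation.ReflTransGen Zc.LeviAdj (PTv 0) (PTv 46) := rl18.tail (adjLP 46 18 (by decide))
  have rp25 : Relation.ReflTransGen Zc.LeviAdj (PTv 0) (PTv 25) := rl38.tail (adjLP 25 38 (by decide))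
  have rp37 : Relation.ReflTransGen Zc.LeviAdj (PTv 0) (PTv 37) := rl38.tail (adjLP 37 38 (by decide))
  have rp11 : Relation.ReflTransGen Zc.LeviAdj (PTv 0) (PTv 11) := rl35.tail (adjLP 11 35 (by decide))
  have rp21 : Relation.ReflTransGen Zc.LeviAdj (PTv 0) (PTv 21) := rl45.tail (adjLP 21 45 (by decide))
  have rp47 : Relation.ReflTransGen Zc.LeviAdj (PTv 0) (PTv 47) := rl45.tail (adjLP 47 45 (by decide))
  have rp5 : Relation.ReflTransGen Zc.LeviAdj (PTv 0) (PTv 5) := rl16.tail (adjLP 5 16 (by decide))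
  have rp39 : Relation.ReflTransGen Zc.LeviAdj (PTv 0) (PTv 39) := rl16.tail (adjLP 39 16 (by decide))
  have rp31 : Relation.ReflTransGen Zc.LeviAdj (PTv 0) (PTv 31) := rl42.tail (adjLP 31 42 (by decide))
  have rp44 : Relation.ReflTransGen Zc.LeviAdj (PTv 0) (PTv 44) := rl42.tail (adjLP 44 42 (by decide))
  have rp10 : Relation.ReflTransGen Zc.LeviAdj (PTv 0) (PTv 10) := rl30.tail (adjLP 10 30 (by decide))
  have rp17 : Relation.ReflTransGen Zc.LeviAdj (PTv 0) (PTv 17) := rl41.tail (adjLP 17 41 (by decide))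
  have rp45 : Relation.ReflTransGen Zc.LeviAdj (PTv 0) (PTv 45) := rl41.tail (adjLP 45 41 (by decide))
  have rp7 : Relation.ReflTransGen Zc.LeviAdj (PTv 0) (PTv 7) := rl23.tail (adjLP 7 23 (by decide))
  have rp42 : Relation.ReflTransGen Zc.LeviAdj (PTv 0) (PTv 42) := rl23.tail (adjLP 42 23 (by decide))
  have rp32 : Relation.ReflTransGen Zc.LeviAdj (PTv 0) (PTv 32) := rl44.tail (adjLP 32 44 (by decide))
  have rp41 : Relation.ReflTransGen Zc.LeviAdj (PTv 0) (PTv 41) := rl44.tail (adjLP 41 44 (by decide))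
  have rp9 : Relation.ReflTransGen Zc.LeviAdj (PTv 0) (PTv 9) := rl28.tail (adjLP 9 28 (by decide))
  have rp15 : Relation.ReflTransGen Zc.LeviAdj (PTv 0) (PTv 15) := rl39.tail (adjLP 15 39 (by decide))
  have rp43 : Relation.ReflTransGen Zc.LeviAdj (PTv 0) (PTv 43) := rl39.tail (adjLP 43 39 (by decide))
  have rl19 : Relation.ReflTransGen Zc.LeviAdj (PTv 0) (LNv 19) := rp6.tail (adjPL 6 19 (by decide))
  have rl20 : Relation.ReflTransGen Zc.LeviAdj (PTv 0) (LNv 20) := rp6.tail (adjPL 6 20 (by decide))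
  have rl46 : Relation.ReflTransGen Zc.LeviAdj (PTv 0) (LNv 46) := rp46.tail (adjPL 46 46 (by decide))
  have rl8 : Relation.ReflTransGen Zc.LeviAdj (PTv 0) (LNv 8) := rp25.tail (adjPL 25 8 (by decide))
  have rl27 : Relation.ReflTransGen Zc.LeviAdj (PTv 0) (LNv 27) := rp25.tail (adjPL 25 27 (by decide))
  have rl17 : Relation.ReflTransGen Zc.LeviAdj (PTv 0) (LNv 17) := rp37.tail (adjPL 37 17 (by decide))
  have rl24 : Relation.ReflTransGen Zc.LeviAdj (PTv 0) (LNv 24) := rp37.tail (adjPL 37 24 (by decide))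
  have rl33 : Relation.ReflTransGen Zc.LeviAdj (PTv 0) (LNv 33) := rp11.tail (adjPL 11 33 (by decide))
  have rl34 : Relation.ReflTransGen Zc.LeviAdj (PTv 0) (LNv 34) := rp11.tail (adjPL 11 34 (by decide))
  have rl14 : Relation.ReflTransGen Zc.LeviAdj (PTv 0) (LNv 14) := rp21.tail (adjPL 21 14 (by decide))
  have rl21 : Relation.ReflTransGen Zc.LeviAdj (PTv 0) (LNv 21) := rp47.tail (adjPL 47 21 (by decide))
  have rl32 : Relation.ReflTransGen Zc.LeviAdj (PTv 0) (LNv 32) := rp47.tail (adjPL 47 32 (by decide))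
  have rl15 : Relation.ReflTransGen Zc.LeviAdj (PTv 0) (LNv 15) := rp5.tail (adjPL 5 15 (by decide))
  have rl43 : Relation.ReflTransGen Zc.LeviAdj (PTv 0) (LNv 43) := rp39.tail (adjPL 39 43 (by decide))
  have rl4 : Relation.ReflTransGen Zc.LeviAdj (PTv 0) (LNv 4) := rp31.tail (adjPL 31 4 (by decide))
  have rl22 : Relation.ReflTransGen Zc.LeviAdj (PTv 0) (LNv 22) := rp44.tail (adjPL 44 22 (by decide))
  have rl26 : Relation.ReflTransGen Zc.LeviAdj (PTv 0) (LNv 26) := rp44.tail (adjPL 44 26 (by decide))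
  have rl31 : Relation.ReflTransGen Zc.LeviAdj (PTv 0) (LNv 31) := rp10.tail (adjPL 10 31 (by decide))
  have rl13 : Relation.ReflTransGen Zc.LeviAdj (PTv 0) (LNv 13) := rp17.tail (adjPL 17 13 (by decide))
  have rl29 : Relation.ReflTransGen Zc.LeviAdj (PTv 0) (LNv 29) := rp45.tail (adjPL 45 29 (by decide))
  have rl47 : Relation.ReflTransGen Zc.LeviAdj (PTv 0) (LNv 47) := rp42.tail (adjPL 42 47 (by decide))
  have rl9 : Relation.ReflTransGen Zc.LeviAdj (PTv 0) (LNv 9) := rp32.tail (adjPL 32 9 (by decide))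
  have rl25 : Relation.ReflTransGen Zc.LeviAdj (PTv 0) (LNv 25) := rp41.tail (adjPL 41 25 (by decide))
  have rl12 : Relation.ReflTransGen Zc.LeviAdj (PTv 0) (LNv 12) := rp15.tail (adjPL 15 12 (by decide))
  have rp16 : Relation.ReflTransGen Zc.LeviAdj (PTv 0) (PTv 16) := rl19.tail (adjLP 16 19 (by decide))
  have rp23 : Relation.ReflTransGen Zc.LeviAdj (PTv 0) (PTv 23) := rl20.tail (adjLP 23 20 (by decide))
  have rp22 : Relation.ReflTransGen Zc.LeviAdj (PTv 0) (PTv 22) := rl46.tail (adjLP 22 46 (by decide))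
  have rp34 : Relation.ReflTransGen Zc.LeviAdj (PTv 0) (PTv 34) := rl46.tail (adjLP 34 46 (by decide))
  have rp2 : Relation.ReflTransGen Zc.LeviAdj (PTv 0) (PTv 2) := rl8.tail (adjLP 2 8 (by decide))
  have rp36 : Relation.ReflTransGen Zc.LeviAdj (PTv 0) (PTv 36) := rl27.tail (adjLP 36 27 (by decide))
  have rp8 : Relation.ReflTransGen Zc.LeviAdj (PTv 0) (PTv 8) := rl24.tail (adjLP 8 24 (by decide))
  have rp24 : Relation.ReflTransGen Zc.LeviAdj (PTv 0) (PTv 24) := rl24.tail (adjLP 24 24 (by decide))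
  have rp38 : Relation.ReflTransGen Zc.LeviAdj (PTv 0) (PTv 38) := rl33.tail (adjLP 38 33 (by decide))
  have rp33 : Relation.ReflTransGen Zc.LeviAdj (PTv 0) (PTv 33) := rl34.tail (adjLP 33 34 (by decide))
  have rp4 : Relation.ReflTransGen Zc.LeviAdj (PTv 0) (PTv 4) := rl14.tail (adjLP 4 14 (by decide))
  have rp13 : Relation.ReflTransGen Zc.LeviAdj (PTv 0) (PTv 13) := rl21.tail (adjLP 13 21 (by decide))
  have rp12 : Relation.ReflTransGen Zc.LeviAdj (PTv 0) (PTv 12) := rl15.tail (adjLP 12 15 (by decide))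
  have rp19 : Relation.ReflTransGen Zc.LeviAdj (PTv 0) (PTv 19) := rl43.tail (adjLP 19 43 (by decide))
  have rp29 : Relation.ReflTransGen Zc.LeviAdj (PTv 0) (PTv 29) := rl43.tail (adjLP 29 43 (by decide))
  have rp1 : Relation.ReflTransGen Zc.LeviAdj (PTv 0) (PTv 1) := rl4.tail (adjLP 1 4 (by decide))
  have rp28 : Relation.ReflTransGen Zc.LeviAdj (PTv 0) (PTv 28) := rl26.tail (adjLP 28 26 (by decide))
  have rp40 : Relation.ReflTransGen Zc.LeviAdj (PTv 0) (PTv 40) := rl31.tail (adjLP 40 31 (by decide))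
  have rp3 : Relation.ReflTransGen Zc.LeviAdj (PTv 0) (PTv 3) := rl9.tail (adjLP 3 9 (by decide))
  have rp26 : Relation.ReflTransGen Zc.LeviAdj (PTv 0) (PTv 26) := rl25.tail (adjLP 26 25 (by decide))
  have rl10 : Relation.ReflTransGen Zc.LeviAdj (PTv 0) (LNv 10) := rp16.tail (adjPL 16 10 (by decide))
  have rl40 : Relation.ReflTransGen Zc.LeviAdj (PTv 0) (LNv 40) := rp16.tail (adjPL 16 40 (by decide))
  have rl5 : Relation.ReflTransGen Zc.LeviAdj (PTv 0) (LNv 5) := rp23.tail (adjPL 23 5 (by decide))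
  have rl11 : Relation.ReflTransGen Zc.LeviAdj (PTv 0) (LNv 11) := rp22.tail (adjPL 22 11 (by decide))
  have rl3 : Relation.ReflTransGen Zc.LeviAdj (PTv 0) (LNv 3) := rp34.tail (adjPL 34 3 (by decide))
  have rl6 : Relation.ReflTransGen Zc.LeviAdj (PTv 0) (LNv 6) := rp2.tail (adjPL 2 6 (by decide))
  have rl7 : Relation.ReflTransGen Zc.LeviAdj (PTv 0) (LNv 7) := rp2.tail (adjPL 2 7 (by decide))
  have rl37 : Relation.ReflTransGen Zc.LeviAdj (PTv 0) (LNv 37) := rp36.tail (adjPL 36 37 (by decide))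
  have rl36 : Relation.ReflTransGen Zc.LeviAdj (PTv 0) (LNv 36) := rp12.tail (adjPL 12 36 (by decide))
  constructor
  · intro i; fin_cases i
    exacts [rp0, rp1, rp2, rp3, rp4, rp5, rp6, rp7, rp8, rp9, rp10, rp11, rp12, rp13, rp14, rp15, rp16, rp17, rp18, rp19, rp20, rp21, rp22, rp23, rp24, rp25, rp26, rp27, rp28, rp29, rp30, rp31, rp32, rp33, rp34, rp35, rp36, rp37, rp38, rp39, rp40, rp41, rp42, rp43, rp44, rp45, rp46, rp47]
  · intro l; fin_cases l
    exacts [rl0, rl1, rl2, rl3, rl4, rl5, rl6, rl7, rl8, rl9, rl10, rl11, rl12, rl13, rl14, rl15, rl16, rl17, rl18, rl19, rl20, rl21, rl22, rl23, rl24, rl25, rl26, rl27, rl28, rl29, rl30, rl31, rl32, rl33, rl34, rl35, rl36, rl37, rl38, rl39, rl40, rl41, rl42, rl43, rl44, rl45, rl46, rl47]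

lemma Zc_connected : Zc.Connected := by
  intro a b ha hb
  have key : ∀ c, Zc.LeviVert c → Relation.ReflTransGen Zc.LeviAdj (PTv 0) c := by
    rintro (p | l) hc
    · obtain ⟨i, rfl⟩ := hc
      exact reach_all.1 i
    · obtain ⟨j, rfl⟩ := hc
      exact reach_all.2 j
  have hsymm := fun {x y} (h : Relation.ReflTransGen Zc.LeviAdj x y) =>
    (@Relation.ReflTransGen.stdSymm _ Zc.LeviAdj ⟨fun x y h => LeviAdj_symm h⟩).symm x y h
  exact (hsymm (key a ha)).trans (key b hb)


-- § symmetry: basic tools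
def toEhom : (Fin 3 → ℤ) →+ E3 where
  toFun := toE
  map_zero' := by ext j; simp [toE]
  map_add' := by
    intro a b; ext j
    show ((a j + b j : ℤ) : ℝ) = (a j : ℝ) + (b j : ℝ)
    push_cast; ring

lemma norm_toE_sq (w : Fin 3 → ℤ) : ‖toE w‖ ^ 2 = ((nsq w : ℤ) : ℝ) := by
  rw [EuclideanSpace.norm_eq, Real.sq_sqrt (by positivity)]
  rw [Fin.sum_univ_three]
  show ‖(w 0 : ℝ)‖ ^ 2 + ‖(w 1 : ℝ)‖ ^ 2 + ‖(w 2 : ℝ)‖ ^ 2 = _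
  simp only [Real.norm_eq_abs, sq_abs, nsq]
  push_cast; ring

lemma vt0 : pt 1 1 1 = toE (Pv 0) := by
  ext j; fin_cases j <;> (show _ = ((Pv 0 _ : ℤ) : ℝ)) <;> norm_num [pt, Pv, toE]
lemma vt1 : pt 1 (-1) (-1) = toE (Pv 1) := by
  ext j; fin_cases j <;> (show _ = ((Pv 1 _ : ℤ) : ℝ)) <;> norm_num [pt, Pv, toE]
lemma vt2 : pt (-1) 1 (-1) = toE (Pv 2) := by
  ext j; fin_cases j <;> (show _ = ((Pv 2 _ : ℤ) : ℝ)) <;> norm_num [pt, toE, show Pv 2 = ![-1,1,-1] from by decide]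
lemma vt3 : pt (-1) (-1) 1 = toE (Pv 3) := by
  ext j; fin_cases j <;> (show _ = ((Pv 3 _ : ℤ) : ℝ)) <;> norm_num [pt, toE, show Pv 3 = ![-1,-1,1] from by decide]

lemma VT_eq : VT = {toE (Pv 0), toE (Pv 1), toE (Pv 2), toE (Pv 3)} := by
  rw [VT, vt0, vt1, vt2, vt3]

lemma VT_mem_iff (y : E3) :
    y ∈ VT ↔ y = toE (Pv 0) ∨ y = toE (Pv 1) ∨ y = toE (Pv 2) ∨ y = toE (Pv 3) := by
  rw [VT_eq]; simp [Set.mem_insert_iff]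

lemma shellVT : VT = {x ∈ Pset | ‖x‖ ^ 2 = 3} := by
  ext y
  constructor
  · intro hy
    rcases (VT_mem_iff y).mp hy with rfl | rfl | rfl | rfl
    · exact ⟨⟨_, rfl⟩, by rw [norm_toE_sq]; exact_mod_cast (by decide : nsq (Pv 0) = 3)⟩
    · exact ⟨⟨_, rfl⟩, by rw [norm_toE_sq]; exact_mod_cast (by decide : nsq (Pv 1) = 3)⟩
    · exact ⟨⟨_, rfl⟩, by rw [norm_toE_sq]; exact_mod_cast (by decide : nsq (Pv 2) = 3)⟩
    · exact ⟨⟨_, rfl⟩, by rw [norm_toE_sq]; exact_mod_cast (by decide : nsq (Pv 3) = 3)⟩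
  · rintro ⟨⟨i, rfl⟩, hn⟩
    rw [norm_toE_sq] at hn
    have h3 : nsq (Pv i) = 3 := by exact_mod_cast hn
    have hi : i.val < 4 := by
      by_contra h
      exact hShell i (by omega) h3
    have : i = 0 ∨ i = 1 ∨ i = 2 ∨ i = 3 := by
      rcases (by omega : i.val = 0 ∨ i.val = 1 ∨ i.val = 2 ∨ i.val = 3) with h|h|h|h
      · exact Or.inl (Fin.ext h)
      · exact Or.inr (Or.inl (Fin.ext h))
      · exact Or.inr (Or.inr (Or.inl (Fin.ext h)))
      · exact Or.inr (Or.inr (Or.inr (Fin.ext h)))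
    rcases this with rfl | rfl | rfl | rfl <;> rw [VT_mem_iff] <;> tauto

lemma image_lineThrough (f : E3 ≃ₗᵢ[ℝ] E3) (p q : E3) :
    f '' lineThrough p q = lineThrough (f p) (f q) := by
  ext y
  constructor
  · rintro ⟨x, ⟨t, rfl⟩, rfl⟩
    exact ⟨t, by simp [map_add, map_smul, map_sub]⟩
  · rintro ⟨t, rfl⟩
    exact ⟨p + t • (q - p), ⟨t, rfl⟩, by simp [map_add, map_smul, map_sub]⟩

lemma isom_expand (f : E3 ≃ₗᵢ[ℝ] E3) (x : E3) :
    f x = ((x 0 + x 1) / 2) • f (toE (Pv 0)) + ((x 0 - x 2) / 2) • f (toE (Pv 1)) +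
      ((x 1 - x 2) / 2) • f (toE (Pv 2)) := by
  have hx : x = ((x 0 + x 1) / 2) • toE (Pv 0) + ((x 0 - x 2) / 2) • toE (Pv 1) +
      ((x 1 - x 2) / 2) • toE (Pv 2) := by
    ext j
    have h3 : ∀ m : Fin 3, m = 0 ∨ m = 1 ∨ m = 2 := by decide
    rcases h3 j with rfl | rfl | rfl
    · show x 0 = ((x 0 + x 1) / 2) * ((Pv 0 0 : ℤ) : ℝ) + ((x 0 - x 2) / 2) * ((Pv 1 0 : ℤ) : ℝ)
        + ((x 1 - x 2) / 2) * ((Pv 2 0 : ℤ) : ℝ)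
      norm_num [show Pv 0 = ![1,1,1] from by decide, show Pv 1 = ![1,-1,-1] from by decide, show Pv 2 = ![-1,1,-1] from by decide]; ring
    · show x 1 = ((x 0 + x 1) / 2) * ((Pv 0 1 : ℤ) : ℝ) + ((x 0 - x 2) / 2) * ((Pv 1 1 : ℤ) : ℝ)
        + ((x 1 - x 2) / 2) * ((Pv 2 1 : ℤ) : ℝ)
      norm_num [show Pv 0 = ![1,1,1] from by decide, show Pv 1 = ![1,-1,-1] from by decide, show Pv 2 = ![-1,1,-1] from by decide]; ring
    · show x 2 = ((x 0 + x 1) / 2) * ((Pv 0 2 : ℤ) : ℝ) + ((x 0 - x 2) / 2) * ((Pv 1 2 : ℤ) : ℝ)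
        + ((x 1 - x 2) / 2) * ((Pv 2 2 : ℤ) : ℝ)
      norm_num [show Pv 0 = ![1,1,1] from by decide, show Pv 1 = ![1,-1,-1] from by decide, show Pv 2 = ![-1,1,-1] from by decide, Matrix.cons_val_two, Matrix.tail_cons, Matrix.head_cons]; ring
  calc f x = f (((x 0 + x 1) / 2) • toE (Pv 0) + ((x 0 - x 2) / 2) • toE (Pv 1) +
      ((x 1 - x 2) / 2) • toE (Pv 2)) := by rw [← hx]
    _ = _ := by simp [map_add, map_smul]

lemma det_of_matrix (f : E3 ≃ₗᵢ[ℝ] E3) (M : Fin 3 → Fin 3 → ℤ)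
    (h : ∀ w, f (toE w) = toE (mvec M w)) :
    LinearMap.det (f.toLinearEquiv : E3 →ₗ[ℝ] E3) = ((idet M : ℤ) : ℝ) := by
  classical
  set b := (EuclideanSpace.basisFun (Fin 3) ℝ).toBasis with hbdef
  rw [← LinearMap.det_toMatrix b]
  have hb : ∀ j : Fin 3, (b j : E3) = toE (fun m => if m = j then 1 else 0) := by
    intro j
    rw [hbdef, OrthonormalBasis.coe_toBasis, EuclideanSpace.basisFun_apply]
    ext m
    show _ = ((if m = j then (1:ℤ) else 0 : ℤ) : ℝ)
    rw [EuclideanSpace.single_apply]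
    split <;> simp
  have hentry : ∀ i j : Fin 3,
      LinearMap.toMatrix b b (f.toLinearEquiv : E3 →ₗ[ℝ] E3) i j = ((M i j : ℤ) : ℝ) := by
    intro i j
    rw [LinearMap.toMatrix_apply]
    have : (f.toLinearEquiv : E3 →ₗ[ℝ] E3) (b j) = f (b j) := rfl
    rw [this, hb j, h]
    rw [hbdef, OrthonormalBasis.coe_toBasis_repr_apply, EuclideanSpace.basisFun_repr]
    show ((mvec M (fun m => if m = j then 1 else 0) i : ℤ) : ℝ) = _
    congr 1
    fin_cases j <;> simp [mvec]
  rw [Matrix.det_fin_three]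
  simp only [hentry, idet]
  push_cast; ring


-- § classification of linear isometries preserving VT
set_option maxHeartbeats 1000000 in
lemma classify (f : E3 ≃ₗᵢ[ℝ] E3) (hVT : f '' VT = VT) :
    ∃ k : Fin 24, ∀ w : Fin 3 → ℤ, f (toE w) = toE (mvec (CMat k) w) := by
  have hm : ∀ m : Fin 48, m.val < 4 → f (toE (Pv m)) ∈ VT := by
    intro m hm4
    rw [← hVT]
    refine Set.mem_image_of_mem f ?_
    rw [VT_mem_iff]
    rcases (by omega : m.val = 0 ∨ m.val = 1 ∨ m.val = 2 ∨ m.val = 3) with h|h|h|h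
    · exact Or.inl (by rw [show m = 0 from Fin.ext (by simpa using h)])
    · exact Or.inr (Or.inl (by rw [show m = 1 from Fin.ext (by simpa using h)]))
    · exact Or.inr (Or.inr (Or.inl (by rw [show m = 2 from Fin.ext (by simpa using h)])))
    · exact Or.inr (Or.inr (Or.inr (by rw [show m = 3 from Fin.ext (by simpa using h)])))
  have q0 : Pv 0 = ![1,1,1] := by decide
  have q1 : Pv 1 = ![1,-1,-1] := by decide
  have q2 : Pv 2 = ![-1,1,-1] := by decide
  have q3 : Pv 3 = ![-1,-1,1] := by decide
  have h0 := (VT_mem_iff _).mp (hm 0 (by omega))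
  have h1 := (VT_mem_iff _).mp (hm 1 (by omega))
  have h2 := (VT_mem_iff _).mp (hm 2 (by omega))
  rcases h0 with e0 | e0 | e0 | e0 <;> rcases h1 with e1 | e1 | e1 | e1 <;>
    rcases h2 with e2 | e2 | e2 | e2
  · exact absurd (hPvInj 0 1 (toE_inj (f.injective (e0.trans e1.symm)))) (by decide)
  · exact absurd (hPvInj 0 1 (toE_inj (f.injective (e0.trans e1.symm)))) (by decide)
  · exact absurd (hPvInj 0 1 (toE_inj (f.injective (e0.trans e1.symm)))) (by decide)
  · exact absurd (hPvInj 0 1 (toE_inj (f.injective (e0.trans e1.symm)))) (by decide)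
  · exact absurd (hPvInj 0 2 (toE_inj (f.injective (e0.trans e2.symm)))) (by decide)
  · exact absurd (hPvInj 1 2 (toE_inj (f.injective (e1.trans e2.symm)))) (by decide)
  · refine ⟨0, fun w => ?_⟩
    have hCM : CMat 0 = ![![1,0,0],![0,1,0],![0,0,1]] := by decide
    rw [isom_expand f (toE w), e0, e1, e2]
    ext j
    have h3 : ∀ m : Fin 3, m = 0 ∨ m = 1 ∨ m = 2 := by decide
    rcases h3 j with rfl | rfl | rfl <;>
      · show ((w 0 : ℝ) + w 1) / 2 * _ + ((w 0 : ℝ) - w 2) / 2 * _ + ((w 1 : ℝ) - w 2) / 2 * _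
          = ((mvec (CMat 0) w _ : ℤ) : ℝ)
        rw [hCM]
        simp only [q0, q1, q2, q3]
        norm_num [mvec, toE, Matrix.vecHead, Matrix.vecTail, Function.comp]
        try push_cast
        try ring
  · refine ⟨12, fun w => ?_⟩
    have hCM : CMat 12 = ![![1,0,0],![0,0,1],![0,1,0]] := by decide
    rw [isom_expand f (toE w), e0, e1, e2]
    ext j
    have h3 : ∀ m : Fin 3, m = 0 ∨ m = 1 ∨ m = 2 := by decide
    rcases h3 j with rfl | rfl | rfl <;>
      · show ((w 0 : ℝ) + w 1) / 2 * _ + ((w 0 : ℝ) - w 2) / 2 * _ + ((w 1 : ℝ) - w 2) / 2 * _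
          = ((mvec (CMat 12) w _ : ℤ) : ℝ)
        rw [hCM]
        simp only [q0, q1, q2, q3]
        norm_num [mvec, toE, Matrix.vecHead, Matrix.vecTail, Function.comp]
        try push_cast
        try ring
  · exact absurd (hPvInj 0 2 (toE_inj (f.injective (e0.trans e2.symm)))) (by decide)
  · refine ⟨13, fun w => ?_⟩
    have hCM : CMat 13 = ![![0,1,0],![1,0,0],![0,0,1]] := by decide
    rw [isom_expand f (toE w), e0, e1, e2]
    ext j
    have h3 : ∀ m : Fin 3, m = 0 ∨ m = 1 ∨ m = 2 := by decide
    rcases h3 j with rfl | rfl | rfl <;>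
      · show ((w 0 : ℝ) + w 1) / 2 * _ + ((w 0 : ℝ) - w 2) / 2 * _ + ((w 1 : ℝ) - w 2) / 2 * _
          = ((mvec (CMat 13) w _ : ℤ) : ℝ)
        rw [hCM]
        simp only [q0, q1, q2, q3]
        norm_num [mvec, toE, Matrix.vecHead, Matrix.vecTail, Function.comp]
        try push_cast
        try ring
  · exact absurd (hPvInj 1 2 (toE_inj (f.injective (e1.trans e2.symm)))) (by decide)
  · refine ⟨1, fun w => ?_⟩
    have hCM : CMat 1 = ![![0,0,1],![1,0,0],![0,1,0]] := by decide
    rw [isom_expand f (toE w), e0, e1, e2]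
    ext j
    have h3 : ∀ m : Fin 3, m = 0 ∨ m = 1 ∨ m = 2 := by decide
    rcases h3 j with rfl | rfl | rfl <;>
      · show ((w 0 : ℝ) + w 1) / 2 * _ + ((w 0 : ℝ) - w 2) / 2 * _ + ((w 1 : ℝ) - w 2) / 2 * _
          = ((mvec (CMat 1) w _ : ℤ) : ℝ)
        rw [hCM]
        simp only [q0, q1, q2, q3]
        norm_num [mvec, toE, Matrix.vecHead, Matrix.vecTail, Function.comp]
        try push_cast
        try ring
  · exact absurd (hPvInj 0 2 (toE_inj (f.injective (e0.trans e2.symm)))) (by decide)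
  · refine ⟨2, fun w => ?_⟩
    have hCM : CMat 2 = ![![0,1,0],![0,0,1],![1,0,0]] := by decide
    rw [isom_expand f (toE w), e0, e1, e2]
    ext j
    have h3 : ∀ m : Fin 3, m = 0 ∨ m = 1 ∨ m = 2 := by decide
    rcases h3 j with rfl | rfl | rfl <;>
      · show ((w 0 : ℝ) + w 1) / 2 * _ + ((w 0 : ℝ) - w 2) / 2 * _ + ((w 1 : ℝ) - w 2) / 2 * _
          = ((mvec (CMat 2) w _ : ℤ) : ℝ)
        rw [hCM]
        simp only [q0, q1, q2, q3]
        norm_num [mvec, toE, Matrix.vecHead, Matrix.vecTail, Function.comp]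
        try push_cast
        try ring
  · refine ⟨14, fun w => ?_⟩
    have hCM : CMat 14 = ![![0,0,1],![0,1,0],![1,0,0]] := by decide
    rw [isom_expand f (toE w), e0, e1, e2]
    ext j
    have h3 : ∀ m : Fin 3, m = 0 ∨ m = 1 ∨ m = 2 := by decide
    rcases h3 j with rfl | rfl | rfl <;>
      · show ((w 0 : ℝ) + w 1) / 2 * _ + ((w 0 : ℝ) - w 2) / 2 * _ + ((w 1 : ℝ) - w 2) / 2 * _
          = ((mvec (CMat 14) w _ : ℤ) : ℝ)
        rw [hCM]
        simp only [q0, q1, q2, q3]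
        norm_num [mvec, toE, Matrix.vecHead, Matrix.vecTail, Function.comp]
        try push_cast
        try ring
  · exact absurd (hPvInj 1 2 (toE_inj (f.injective (e1.trans e2.symm)))) (by decide)
  · exact absurd (hPvInj 1 2 (toE_inj (f.injective (e1.trans e2.symm)))) (by decide)
  · exact absurd (hPvInj 0 2 (toE_inj (f.injective (e0.trans e2.symm)))) (by decide)
  · refine ⟨15, fun w => ?_⟩
    have hCM : CMat 15 = ![![1,0,0],![0,0,-1],![0,-1,0]] := by decide
    rw [isom_expand f (toE w), e0, e1, e2]
    ext j
    have h3 : ∀ m : Fin 3, m = 0 ∨ m = 1 ∨ m = 2 := by decide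
    rcases h3 j with rfl | rfl | rfl <;>
      · show ((w 0 : ℝ) + w 1) / 2 * _ + ((w 0 : ℝ) - w 2) / 2 * _ + ((w 1 : ℝ) - w 2) / 2 * _
          = ((mvec (CMat 15) w _ : ℤ) : ℝ)
        rw [hCM]
        simp only [q0, q1, q2, q3]
        norm_num [mvec, toE, Matrix.vecHead, Matrix.vecTail, Function.comp]
        try push_cast
        try ring
  · refine ⟨3, fun w => ?_⟩
    have hCM : CMat 3 = ![![1,0,0],![0,-1,0],![0,0,-1]] := by decide
    rw [isom_expand f (toE w), e0, e1, e2]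
    ext j
    have h3 : ∀ m : Fin 3, m = 0 ∨ m = 1 ∨ m = 2 := by decide
    rcases h3 j with rfl | rfl | rfl <;>
      · show ((w 0 : ℝ) + w 1) / 2 * _ + ((w 0 : ℝ) - w 2) / 2 * _ + ((w 1 : ℝ) - w 2) / 2 * _
          = ((mvec (CMat 3) w _ : ℤ) : ℝ)
        rw [hCM]
        simp only [q0, q1, q2, q3]
        norm_num [mvec, toE, Matrix.vecHead, Matrix.vecTail, Function.comp]
        try push_cast
        try ring
  · exact absurd (hPvInj 0 1 (toE_inj (f.injective (e0.trans e1.symm)))) (by decide)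
  · exact absurd (hPvInj 0 1 (toE_inj (f.injective (e0.trans e1.symm)))) (by decide)
  · exact absurd (hPvInj 0 1 (toE_inj (f.injective (e0.trans e1.symm)))) (by decide)
  · exact absurd (hPvInj 0 1 (toE_inj (f.injective (e0.trans e1.symm)))) (by decide)
  · refine ⟨4, fun w => ?_⟩
    have hCM : CMat 4 = ![![0,1,0],![0,0,-1],![-1,0,0]] := by decide
    rw [isom_expand f (toE w), e0, e1, e2]
    ext j
    have h3 : ∀ m : Fin 3, m = 0 ∨ m = 1 ∨ m = 2 := by decide
    rcases h3 j with rfl | rfl | rfl <;>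
      · show ((w 0 : ℝ) + w 1) / 2 * _ + ((w 0 : ℝ) - w 2) / 2 * _ + ((w 1 : ℝ) - w 2) / 2 * _
          = ((mvec (CMat 4) w _ : ℤ) : ℝ)
        rw [hCM]
        simp only [q0, q1, q2, q3]
        norm_num [mvec, toE, Matrix.vecHead, Matrix.vecTail, Function.comp]
        try push_cast
        try ring
  · exact absurd (hPvInj 0 2 (toE_inj (f.injective (e0.trans e2.symm)))) (by decide)
  · exact absurd (hPvInj 1 2 (toE_inj (f.injective (e1.trans e2.symm)))) (by decide)
  · refine ⟨16, fun w => ?_⟩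
    have hCM : CMat 16 = ![![0,0,1],![0,-1,0],![-1,0,0]] := by decide
    rw [isom_expand f (toE w), e0, e1, e2]
    ext j
    have h3 : ∀ m : Fin 3, m = 0 ∨ m = 1 ∨ m = 2 := by decide
    rcases h3 j with rfl | rfl | rfl <;>
      · show ((w 0 : ℝ) + w 1) / 2 * _ + ((w 0 : ℝ) - w 2) / 2 * _ + ((w 1 : ℝ) - w 2) / 2 * _
          = ((mvec (CMat 16) w _ : ℤ) : ℝ)
        rw [hCM]
        simp only [q0, q1, q2, q3]
        norm_num [mvec, toE, Matrix.vecHead, Matrix.vecTail, Function.comp]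
        try push_cast
        try ring
  · refine ⟨17, fun w => ?_⟩
    have hCM : CMat 17 = ![![0,1,0],![-1,0,0],![0,0,-1]] := by decide
    rw [isom_expand f (toE w), e0, e1, e2]
    ext j
    have h3 : ∀ m : Fin 3, m = 0 ∨ m = 1 ∨ m = 2 := by decide
    rcases h3 j with rfl | rfl | rfl <;>
      · show ((w 0 : ℝ) + w 1) / 2 * _ + ((w 0 : ℝ) - w 2) / 2 * _ + ((w 1 : ℝ) - w 2) / 2 * _
          = ((mvec (CMat 17) w _ : ℤ) : ℝ)
        rw [hCM]
        simp only [q0, q1, q2, q3]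
        norm_num [mvec, toE, Matrix.vecHead, Matrix.vecTail, Function.comp]
        try push_cast
        try ring
  · exact absurd (hPvInj 0 2 (toE_inj (f.injective (e0.trans e2.symm)))) (by decide)
  · refine ⟨5, fun w => ?_⟩
    have hCM : CMat 5 = ![![0,0,1],![-1,0,0],![0,-1,0]] := by decide
    rw [isom_expand f (toE w), e0, e1, e2]
    ext j
    have h3 : ∀ m : Fin 3, m = 0 ∨ m = 1 ∨ m = 2 := by decide
    rcases h3 j with rfl | rfl | rfl <;>
      · show ((w 0 : ℝ) + w 1) / 2 * _ + ((w 0 : ℝ) - w 2) / 2 * _ + ((w 1 : ℝ) - w 2) / 2 * _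
          = ((mvec (CMat 5) w _ : ℤ) : ℝ)
        rw [hCM]
        simp only [q0, q1, q2, q3]
        norm_num [mvec, toE, Matrix.vecHead, Matrix.vecTail, Function.comp]
        try push_cast
        try ring
  · exact absurd (hPvInj 1 2 (toE_inj (f.injective (e1.trans e2.symm)))) (by decide)
  · exact absurd (hPvInj 1 2 (toE_inj (f.injective (e1.trans e2.symm)))) (by decide)
  · refine ⟨6, fun w => ?_⟩
    have hCM : CMat 6 = ![![0,0,-1],![1,0,0],![0,-1,0]] := by decide
    rw [isom_expand f (toE w), e0, e1, e2]
    ext j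
    have h3 : ∀ m : Fin 3, m = 0 ∨ m = 1 ∨ m = 2 := by decide
    rcases h3 j with rfl | rfl | rfl <;>
      · show ((w 0 : ℝ) + w 1) / 2 * _ + ((w 0 : ℝ) - w 2) / 2 * _ + ((w 1 : ℝ) - w 2) / 2 * _
          = ((mvec (CMat 6) w _ : ℤ) : ℝ)
        rw [hCM]
        simp only [q0, q1, q2, q3]
        norm_num [mvec, toE, Matrix.vecHead, Matrix.vecTail, Function.comp]
        try push_cast
        try ring
  · exact absurd (hPvInj 0 2 (toE_inj (f.injective (e0.trans e2.symm)))) (by decide)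
  · refine ⟨18, fun w => ?_⟩
    have hCM : CMat 18 = ![![0,-1,0],![1,0,0],![0,0,-1]] := by decide
    rw [isom_expand f (toE w), e0, e1, e2]
    ext j
    have h3 : ∀ m : Fin 3, m = 0 ∨ m = 1 ∨ m = 2 := by decide
    rcases h3 j with rfl | rfl | rfl <;>
      · show ((w 0 : ℝ) + w 1) / 2 * _ + ((w 0 : ℝ) - w 2) / 2 * _ + ((w 1 : ℝ) - w 2) / 2 * _
          = ((mvec (CMat 18) w _ : ℤ) : ℝ)
        rw [hCM]
        simp only [q0, q1, q2, q3]
        norm_num [mvec, toE, Matrix.vecHead, Matrix.vecTail, Function.comp]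
        try push_cast
        try ring
  · refine ⟨19, fun w => ?_⟩
    have hCM : CMat 19 = ![![0,0,-1],![0,1,0],![-1,0,0]] := by decide
    rw [isom_expand f (toE w), e0, e1, e2]
    ext j
    have h3 : ∀ m : Fin 3, m = 0 ∨ m = 1 ∨ m = 2 := by decide
    rcases h3 j with rfl | rfl | rfl <;>
      · show ((w 0 : ℝ) + w 1) / 2 * _ + ((w 0 : ℝ) - w 2) / 2 * _ + ((w 1 : ℝ) - w 2) / 2 * _
          = ((mvec (CMat 19) w _ : ℤ) : ℝ)
        rw [hCM]
        simp only [q0, q1, q2, q3]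
        norm_num [mvec, toE, Matrix.vecHead, Matrix.vecTail, Function.comp]
        try push_cast
        try ring
  · exact absurd (hPvInj 1 2 (toE_inj (f.injective (e1.trans e2.symm)))) (by decide)
  · exact absurd (hPvInj 0 2 (toE_inj (f.injective (e0.trans e2.symm)))) (by decide)
  · refine ⟨7, fun w => ?_⟩
    have hCM : CMat 7 = ![![0,-1,0],![0,0,1],![-1,0,0]] := by decide
    rw [isom_expand f (toE w), e0, e1, e2]
    ext j
    have h3 : ∀ m : Fin 3, m = 0 ∨ m = 1 ∨ m = 2 := by decide
    rcases h3 j with rfl | rfl | rfl <;>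
      · show ((w 0 : ℝ) + w 1) / 2 * _ + ((w 0 : ℝ) - w 2) / 2 * _ + ((w 1 : ℝ) - w 2) / 2 * _
          = ((mvec (CMat 7) w _ : ℤ) : ℝ)
        rw [hCM]
        simp only [q0, q1, q2, q3]
        norm_num [mvec, toE, Matrix.vecHead, Matrix.vecTail, Function.comp]
        try push_cast
        try ring
  · exact absurd (hPvInj 0 1 (toE_inj (f.injective (e0.trans e1.symm)))) (by decide)
  · exact absurd (hPvInj 0 1 (toE_inj (f.injective (e0.trans e1.symm)))) (by decide)
  · exact absurd (hPvInj 0 1 (toE_inj (f.injective (e0.trans e1.symm)))) (by decide)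
  · exact absurd (hPvInj 0 1 (toE_inj (f.injective (e0.trans e1.symm)))) (by decide)
  · refine ⟨8, fun w => ?_⟩
    have hCM : CMat 8 = ![![-1,0,0],![0,1,0],![0,0,-1]] := by decide
    rw [isom_expand f (toE w), e0, e1, e2]
    ext j
    have h3 : ∀ m : Fin 3, m = 0 ∨ m = 1 ∨ m = 2 := by decide
    rcases h3 j with rfl | rfl | rfl <;>
      · show ((w 0 : ℝ) + w 1) / 2 * _ + ((w 0 : ℝ) - w 2) / 2 * _ + ((w 1 : ℝ) - w 2) / 2 * _
          = ((mvec (CMat 8) w _ : ℤ) : ℝ)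
        rw [hCM]
        simp only [q0, q1, q2, q3]
        norm_num [mvec, toE, Matrix.vecHead, Matrix.vecTail, Function.comp]
        try push_cast
        try ring
  · refine ⟨20, fun w => ?_⟩
    have hCM : CMat 20 = ![![-1,0,0],![0,0,1],![0,-1,0]] := by decide
    rw [isom_expand f (toE w), e0, e1, e2]
    ext j
    have h3 : ∀ m : Fin 3, m = 0 ∨ m = 1 ∨ m = 2 := by decide
    rcases h3 j with rfl | rfl | rfl <;>
      · show ((w 0 : ℝ) + w 1) / 2 * _ + ((w 0 : ℝ) - w 2) / 2 * _ + ((w 1 : ℝ) - w 2) / 2 * _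
          = ((mvec (CMat 20) w _ : ℤ) : ℝ)
        rw [hCM]
        simp only [q0, q1, q2, q3]
        norm_num [mvec, toE, Matrix.vecHead, Matrix.vecTail, Function.comp]
        try push_cast
        try ring
  · exact absurd (hPvInj 0 2 (toE_inj (f.injective (e0.trans e2.symm)))) (by decide)
  · exact absurd (hPvInj 1 2 (toE_inj (f.injective (e1.trans e2.symm)))) (by decide)
  · exact absurd (hPvInj 1 2 (toE_inj (f.injective (e1.trans e2.symm)))) (by decide)
  · refine ⟨21, fun w => ?_⟩
    have hCM : CMat 21 = ![![0,0,-1],![0,-1,0],![1,0,0]] := by decide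
    rw [isom_expand f (toE w), e0, e1, e2]
    ext j
    have h3 : ∀ m : Fin 3, m = 0 ∨ m = 1 ∨ m = 2 := by decide
    rcases h3 j with rfl | rfl | rfl <;>
      · show ((w 0 : ℝ) + w 1) / 2 * _ + ((w 0 : ℝ) - w 2) / 2 * _ + ((w 1 : ℝ) - w 2) / 2 * _
          = ((mvec (CMat 21) w _ : ℤ) : ℝ)
        rw [hCM]
        simp only [q0, q1, q2, q3]
        norm_num [mvec, toE, Matrix.vecHead, Matrix.vecTail, Function.comp]
        try push_cast
        try ring
  · refine ⟨9, fun w => ?_⟩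
    have hCM : CMat 9 = ![![0,-1,0],![0,0,-1],![1,0,0]] := by decide
    rw [isom_expand f (toE w), e0, e1, e2]
    ext j
    have h3 : ∀ m : Fin 3, m = 0 ∨ m = 1 ∨ m = 2 := by decide
    rcases h3 j with rfl | rfl | rfl <;>
      · show ((w 0 : ℝ) + w 1) / 2 * _ + ((w 0 : ℝ) - w 2) / 2 * _ + ((w 1 : ℝ) - w 2) / 2 * _
          = ((mvec (CMat 9) w _ : ℤ) : ℝ)
        rw [hCM]
        simp only [q0, q1, q2, q3]
        norm_num [mvec, toE, Matrix.vecHead, Matrix.vecTail, Function.comp]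
        try push_cast
        try ring
  · exact absurd (hPvInj 0 2 (toE_inj (f.injective (e0.trans e2.symm)))) (by decide)
  · refine ⟨10, fun w => ?_⟩
    have hCM : CMat 10 = ![![0,0,-1],![-1,0,0],![0,1,0]] := by decide
    rw [isom_expand f (toE w), e0, e1, e2]
    ext j
    have h3 : ∀ m : Fin 3, m = 0 ∨ m = 1 ∨ m = 2 := by decide
    rcases h3 j with rfl | rfl | rfl <;>
      · show ((w 0 : ℝ) + w 1) / 2 * _ + ((w 0 : ℝ) - w 2) / 2 * _ + ((w 1 : ℝ) - w 2) / 2 * _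
          = ((mvec (CMat 10) w _ : ℤ) : ℝ)
        rw [hCM]
        simp only [q0, q1, q2, q3]
        norm_num [mvec, toE, Matrix.vecHead, Matrix.vecTail, Function.comp]
        try push_cast
        try ring
  · exact absurd (hPvInj 1 2 (toE_inj (f.injective (e1.trans e2.symm)))) (by decide)
  · refine ⟨22, fun w => ?_⟩
    have hCM : CMat 22 = ![![0,-1,0],![-1,0,0],![0,0,1]] := by decide
    rw [isom_expand f (toE w), e0, e1, e2]
    ext j
    have h3 : ∀ m : Fin 3, m = 0 ∨ m = 1 ∨ m = 2 := by decide
    rcases h3 j with rfl | rfl | rfl <;>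
      · show ((w 0 : ℝ) + w 1) / 2 * _ + ((w 0 : ℝ) - w 2) / 2 * _ + ((w 1 : ℝ) - w 2) / 2 * _
          = ((mvec (CMat 22) w _ : ℤ) : ℝ)
        rw [hCM]
        simp only [q0, q1, q2, q3]
        norm_num [mvec, toE, Matrix.vecHead, Matrix.vecTail, Function.comp]
        try push_cast
        try ring
  · exact absurd (hPvInj 0 2 (toE_inj (f.injective (e0.trans e2.symm)))) (by decide)
  · refine ⟨23, fun w => ?_⟩
    have hCM : CMat 23 = ![![-1,0,0],![0,0,-1],![0,1,0]] := by decide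
    rw [isom_expand f (toE w), e0, e1, e2]
    ext j
    have h3 : ∀ m : Fin 3, m = 0 ∨ m = 1 ∨ m = 2 := by decide
    rcases h3 j with rfl | rfl | rfl <;>
      · show ((w 0 : ℝ) + w 1) / 2 * _ + ((w 0 : ℝ) - w 2) / 2 * _ + ((w 1 : ℝ) - w 2) / 2 * _
          = ((mvec (CMat 23) w _ : ℤ) : ℝ)
        rw [hCM]
        simp only [q0, q1, q2, q3]
        norm_num [mvec, toE, Matrix.vecHead, Matrix.vecTail, Function.comp]
        try push_cast
        try ring
  · refine ⟨11, fun w => ?_⟩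
    have hCM : CMat 11 = ![![-1,0,0],![0,-1,0],![0,0,1]] := by decide
    rw [isom_expand f (toE w), e0, e1, e2]
    ext j
    have h3 : ∀ m : Fin 3, m = 0 ∨ m = 1 ∨ m = 2 := by decide
    rcases h3 j with rfl | rfl | rfl <;>
      · show ((w 0 : ℝ) + w 1) / 2 * _ + ((w 0 : ℝ) - w 2) / 2 * _ + ((w 1 : ℝ) - w 2) / 2 * _
          = ((mvec (CMat 11) w _ : ℤ) : ℝ)
        rw [hCM]
        simp only [q0, q1, q2, q3]
        norm_num [mvec, toE, Matrix.vecHead, Matrix.vecTail, Function.comp]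
        try push_cast
        try ring
  · exact absurd (hPvInj 1 2 (toE_inj (f.injective (e1.trans e2.symm)))) (by decide)
  · exact absurd (hPvInj 0 2 (toE_inj (f.injective (e0.trans e2.symm)))) (by decide)
  · exact absurd (hPvInj 0 1 (toE_inj (f.injective (e0.trans e1.symm)))) (by decide)
  · exact absurd (hPvInj 0 1 (toE_inj (f.injective (e0.trans e1.symm)))) (by decide)
  · exact absurd (hPvInj 0 1 (toE_inj (f.injective (e0.trans e1.symm)))) (by decide)
  · exact absurd (hPvInj 0 1 (toE_inj (f.injective (e0.trans e1.symm)))) (by decide)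


-- § symmetry: forward and backward
local instance : DecidableEq E3 := Classical.decEq _
local instance : DecidableEq (Set E3) := Classical.decEq _

lemma sum_Pv_zero : (Finset.univ.sum fun i : Fin 48 => Pv i) = 0 := by
  funext j
  rw [Finset.sum_apply]
  exact hSum j

lemma sum_Pset : (Finset.univ : Finset (Fin 48)).sum (fun i => toE (Pv i)) = 0 := by
  have : (Finset.univ : Finset (Fin 48)).sum (fun i => toEhom (Pv i)) = toEhom 0 := by
    rw [← map_sum, sum_Pv_zero]
  simpa [toEhom, show toE 0 = 0 from toEhom.map_zero] using this

lemma sum_Pv4_zero : (Finset.univ.sum fun i : Fin 4 => Pv (Fin.castLE (by omega) i)) = 0 := by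
  funext j
  rw [Finset.sum_apply]
  exact hSumVT j

lemma sum_VT4 :
    (Finset.univ : Finset (Fin 4)).sum (fun i => toE (Pv (Fin.castLE (by omega) i))) = 0 := by
  have : (Finset.univ : Finset (Fin 4)).sum (fun i => toEhom (Pv (Fin.castLE (by omega) i)))
      = toEhom 0 := by rw [← map_sum, sum_Pv4_zero]
  simpa [toEhom, show toE 0 = 0 from toEhom.map_zero] using this

lemma vt4_inj : Function.Injective (fun i : Fin 4 => toE (Pv (Fin.castLE (by omega) i))) := by
  intro i j h
  have := hPvInj _ _ (toE_inj h)
  exact Fin.castLE_injective _ this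

lemma VT_coe :
    ↑((Finset.univ : Finset (Fin 4)).image (fun i => toE (Pv (Fin.castLE (by omega) i)))) = VT := by
  rw [Finset.coe_image, Finset.coe_univ, Set.image_univ, VT_eq]
  ext y
  constructor
  · rintro ⟨i, rfl⟩
    fin_cases i
    · exact Or.inl rfl
    · exact Or.inr (Or.inl rfl)
    · exact Or.inr (Or.inr (Or.inl rfl))
    · exact Or.inr (Or.inr (Or.inr rfl))
  · rintro (rfl | rfl | rfl | rfl)
    exacts [⟨0, rfl⟩, ⟨1, rfl⟩, ⟨2, rfl⟩, ⟨3, rfl⟩]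

lemma nsmul_zero_cancel {n : ℕ} (hn : n ≠ 0) {v : E3} (h : n • v = 0) : v = 0 := by
  have h2 : (n : ℝ) • v = 0 := by rw [Nat.cast_smul_eq_nsmul, h]
  rcases smul_eq_zero.mp h2 with h3 | h3
  · exact absurd (Nat.cast_eq_zero.mp h3) hn
  · exact h3

lemma forward (g : E3 ≃ᵢ E3) (hg : Preserves g Zc) :
    OrientationPreserving g ∧ g '' VT = VT := by
  classical
  set F := g.toRealLinearIsometryEquiv with hFdef
  have hFx : ∀ x, F x = g x - g 0 := fun x => g.toRealLinearIsometryEquiv_apply x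
  set Fs : Finset E3 := Finset.univ.image (fun i : Fin 48 => toE (Pv i)) with hFs
  have hcoe : (↑Fs : Set E3) = Zc.pts := by
    rw [hFs, Finset.coe_image, Finset.coe_univ, Set.image_univ]; rfl
  have himg : Finset.image (⇑g) Fs = Fs := by
    apply Finset.coe_injective
    rw [Finset.coe_image, hcoe, hg.1]
  have hsum : Fs.sum id = 0 := by
    rw [hFs, Finset.sum_image (fun a _ b _ h => toE_Pv_inj h)]
    simpa using sum_Pset
  have hsum2 : Fs.sum (fun x => g x) = 0 := by
    have him : (Finset.image (⇑g) Fs).sum id = Fs.sum (fun x => g x) :=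
      Finset.sum_image (fun a _ b _ h => g.injective h)
    rw [← him, himg]
    exact hsum
  have hcard : Fs.card = 48 := by
    rw [hFs, Finset.card_image_of_injective _ toE_Pv_inj, Finset.card_univ, Fintype.card_fin]
  have hg0 : g 0 = 0 := by
    have hptw : ∀ x ∈ Fs, F x + g 0 = g x := fun x _ => by rw [hFx x]; abel
    have h1 : Fs.sum (fun x => F x + g 0) = 0 := by
      rw [Finset.sum_congr rfl hptw]
      exact hsum2
    rw [Finset.sum_add_distrib, Finset.sum_const, hcard] at h1
    have hFsum : Fs.sum (fun x => F x) = 0 := by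
      have h2 : Fs.sum (fun x => F (id x)) = F (Fs.sum id) := (map_sum F id Fs).symm
      rw [hsum, map_zero] at h2
      exact h2
    rw [hFsum, zero_add] at h1
    exact nsmul_zero_cancel (by norm_num) h1
  have hF : ∀ x, F x = g x := fun x => by rw [hFx, hg0, sub_zero]
  have hFP : F '' Zc.pts = Zc.pts := by
    rw [Set.image_congr (fun x _ => hF x), hg.1]
  have hFVT : F '' VT = VT := by
    rw [shellVT]
    ext y
    constructor
    · rintro ⟨x, ⟨hxP, hx3⟩, rfl⟩
      refine ⟨?_, ?_⟩
      · have : F x ∈ F '' Zc.pts := Set.mem_image_of_mem F hxP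
        rwa [hFP] at this
      · rw [LinearIsometryEquiv.norm_map]; exact hx3
    · rintro ⟨hyP, hy3⟩
      have : y ∈ F '' Zc.pts := by rw [hFP]; exact hyP
      obtain ⟨x, hxP, rfl⟩ := this
      exact ⟨x, ⟨hxP, by rw [LinearIsometryEquiv.norm_map] at hy3; exact hy3⟩, rfl⟩
  obtain ⟨k, hk⟩ := classify F hFVT
  by_cases hk12 : k.val < 12
  · have hkk : k = ⟨(⟨k.val, hk12⟩ : Fin 12).val, by omega⟩ := Fin.ext rfl
    have hdet : LinearMap.det (F.toLinearEquiv : E3 →ₗ[ℝ] E3) = 1 := by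
      rw [det_of_matrix F (CMat k) hk, hkk, hDetP ⟨k.val, hk12⟩]
      norm_num
    refine ⟨⟨F, 0, hdet, fun x => by rw [hF x, add_zero]⟩, ?_⟩
    have hgF : ⇑g '' VT = ⇑F '' VT := Set.image_congr (fun x _ => (hF x).symm)
    rw [hgF, hFVT]
  · exfalso
    set m : Fin 12 := ⟨k.val - 12, by omega⟩ with hmdef
    have hkm : k = ⟨12 + m.val, by omega⟩ := by
      apply Fin.ext
      simp only [hmdef]
      omega
    have hwmem : toE (Pv (WitIdx m)) ∈ Zc.pts := ⟨_, rfl⟩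
    have hmem2 : F (toE (Pv (WitIdx m))) ∈ Zc.pts := by
      rw [← hFP]; exact Set.mem_image_of_mem F hwmem
    rw [hk] at hmem2
    obtain ⟨j, hj⟩ := hmem2
    have : Pv j = mvec (CMat k) (Pv (WitIdx m)) := toE_inj hj
    rw [hkm] at this
    exact hWit m j this.symm

lemma backward (g : E3 ≃ᵢ E3) (hOP : OrientationPreserving g) (hgVT : g '' VT = VT) :
    Preserves g Zc := by
  classical
  obtain ⟨f0, b, hdet, hgx⟩ := hOP
  set Vs : Finset E3 :=
    Finset.univ.image (fun i : Fin 4 => toE (Pv (Fin.castLE (by omega) i))) with hVs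
  have hcoeV : (↑Vs : Set E3) = VT := VT_coe
  have himgV : Finset.image (⇑g) Vs = Vs := by
    apply Finset.coe_injective
    rw [Finset.coe_image, hcoeV, hgVT]
  have hsumV : Vs.sum id = 0 := by
    rw [hVs, Finset.sum_image (fun a _ b _ h => vt4_inj h)]
    simpa using sum_VT4
  have hsumV2 : Vs.sum (fun x => g x) = 0 := by
    have him : (Finset.image (⇑g) Vs).sum id = Vs.sum (fun x => g x) :=
      Finset.sum_image (fun a _ b _ h => g.injective h)
    rw [← him, himgV]
    exact hsumV
  have hcardV : Vs.card = 4 := by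
    rw [hVs, Finset.card_image_of_injective _ vt4_inj, Finset.card_univ, Fintype.card_fin]
  have hb : b = 0 := by
    have hptw : ∀ x ∈ Vs, f0 x + b = g x := fun x _ => (hgx x).symm
    have h1 : Vs.sum (fun x => f0 x + b) = 0 := by
      rw [Finset.sum_congr rfl hptw]
      exact hsumV2
    rw [Finset.sum_add_distrib, Finset.sum_const, hcardV] at h1
    have hFsum : Vs.sum (fun x => f0 x) = 0 := by
      have h2 : Vs.sum (fun x => f0 (id x)) = f0 (Vs.sum id) := (map_sum f0 id Vs).symm
      rw [hsumV, map_zero] at h2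
      exact h2
    rw [hFsum, zero_add] at h1
    exact nsmul_zero_cancel (by norm_num) h1
  have hgf : ∀ x, g x = f0 x := fun x => by rw [hgx, hb, add_zero]
  have hfVT : f0 '' VT = VT := by
    rw [← Set.image_congr (fun x (_ : x ∈ VT) => hgf x), hgVT]
  obtain ⟨k, hk⟩ := classify f0 hfVT
  have hk12 : k.val < 12 := by
    by_contra h
    set m : Fin 12 := ⟨k.val - 12, by omega⟩ with hmdef
    have hkm : k = ⟨12 + m.val, by omega⟩ := by
      apply Fin.ext
      simp only [hmdef]
      omega
    have hd := det_of_matrix f0 (CMat k) hk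
    rw [hdet, hkm, hDetI m] at hd
    norm_num at hd
  set k' : Fin 12 := ⟨k.val, hk12⟩ with hk'def
  have hCM' : CMat ⟨k'.val, by omega⟩ = CMat k := by
    congr 1
  have hPPk : ∀ i, mvec (CMat k) (Pv i) = Pv (PPerm k' i) := by
    intro i; rw [← hCM']; exact hPP k' i
  constructor
  · ext y
    constructor
    · rintro ⟨x, ⟨i, rfl⟩, rfl⟩
      refine ⟨PPerm k' i, ?_⟩
      show toE (Pv (PPerm k' i)) = g (toE (Pv i))
      rw [hgf, hk, hPPk]
    · rintro ⟨i, rfl⟩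
      refine ⟨toE (Pv (PPermInv k' i)), ⟨PPermInv k' i, rfl⟩, ?_⟩
      show g (toE (Pv (PPermInv k' i))) = toE (Pv i)
      rw [hgf, hk, hPPk, hPPsurj]
  · rintro l ⟨j, rfl⟩
    have himgl : g '' Ln j = f0 '' Ln j := Set.image_congr (fun x _ => hgf x)
    have hline : f0 '' Ln j =
        lineThrough (toE (Pv (PPerm k' (LAi j)))) (toE (Pv (PPerm k' (LBi j)))) := by
      rw [show Ln j = lineThrough (toE (Pv (LAi j))) (toE (Pv (LBi j))) from rfl,
        image_lineThrough, hk, hk, hPPk, hPPk]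
    refine ⟨LPerm k' j, ?_⟩
    show Ln (LPerm k' j) = g '' Ln j
    rw [himgl, hline]
    have hc := (mem_Ln_iff (PPerm k' (LAi j)) (LPerm k' j)).mpr (hLL k' j).1
    have hd := (mem_Ln_iff (PPerm k' (LBi j)) (LPerm k' j)).mpr (hLL k' j).2
    have hcd : toE (Pv (PPerm k' (LAi j))) ≠ toE (Pv (PPerm k' (LBi j))) :=
      fun h => hPPne k' j (toE_inj h)
    exact (lineThrough_eq hc hd hcd).symm


/-- Example 1 of the paper: a connected (48_3) configuration of points and lines in ℝ³ whose symmetry group is the rotation group of the regular tetrahedron. -/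
theorem tetrahedral_rotational_48_3 :
    ∃ Z : PLConfig, Z.IsBalanced 48 3 ∧ Z.Connected ∧
      ∀ g : E3 ≃ᵢ E3, Preserves g Z ↔ (OrientationPreserving g ∧ g '' VT = VT) := by
  exact ⟨Zc, Zc_balanced, Zc_connected,
    fun g => ⟨forward g, fun h => backward g h.1 h.2⟩⟩
end
end
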